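/- arXiv:2410.11895 — 9 statements merged into one kernel-verified Lean document; each statement's English description precedes it below -/
import Mathlib

section
/- Let X be a compact metrizable topological space equipped with a partial order ≤ whose graph {(x,y) : x ≤ y} is closed in X × X. If (a_n) is a sequence in X with a_n ≤ a_{n+1} for all n, then (a_n) converges. -/
open Filter Topology

/-- In a compact metrizable space with a closed partial order, every monotone
sequence converges. -/
theorem monotone_seq_converges_of_closed_order {X : Type*} [TopologicalSpace X]
    [CompactSpace X] [TopologicalSpace.MetrizableSpace X] [PartialOrder X]
    (hclosed : IsClosed {q : X × X | q.1 ≤ q.2})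
    (a : ℕ → X) (hmono : ∀ n, a n ≤ a (n + 1)) :
    ∃ p : X, Tendsto a atTop (𝓝 p) := by
  have hM : Monotone a := monotone_nat_of_le_succ hmono
  have key : ∀ (p q : X) (φ ψ : ℕ → ℕ), Tendsto φ atTop atTop → Tendsto ψ atTop atTop →
      Tendsto (fun n => a (φ n)) atTop (𝓝 p) → Tendsto (fun n => a (ψ n)) atTop (𝓝 q) →
      p ≤ q := by
    intro p q φ ψ hφ hψ hp hq
    have h1 : ∀ n, a (φ n) ≤ q := by
      intro n
      have hcl : IsClosed {y : X | a (φ n) ≤ y} :=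
        hclosed.preimage (continuous_const.prodMk continuous_id)
      refine hcl.mem_of_tendsto hq ?_
      filter_upwards [hψ.eventually_ge_atTop (φ n)] with m hm
      exact hM hm
    have hcl2 : IsClosed {x : X | x ≤ q} :=
      hclosed.preimage (continuous_id.prodMk continuous_const)
    exact hcl2.mem_of_tendsto hp (Eventually.of_forall h1)
  obtain ⟨p, φ, hφ, hp⟩ := CompactSpace.tendsto_subseq a
  refine ⟨p, tendsto_of_subseq_tendsto ?_⟩
  intro ns hns
  obtain ⟨q, ms, hms, hq⟩ := CompactSpace.tendsto_subseq (a ∘ ns)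
  have hq' : Tendsto (fun n => a (ns (ms n))) atTop (𝓝 q) := hq
  have heq : q = p :=
    le_antisymm
      (key q p (ns ∘ ms) φ (hns.comp hms.tendsto_atTop) hφ.tendsto_atTop hq' hp)
      (key p q φ (ns ∘ ms) hφ.tendsto_atTop (hns.comp hms.tendsto_atTop) hp hq')
  exact ⟨ms, heq ▸ hq'⟩
end

section
/- Let φ be a continuous semiflow on a metric space X with a closed partial order ≤ and an open strict relation ≪ contained in ≤, such that φ is strongly monotone: x ≤ y with x ≠ y implies φ(t,x) ≪ φ(t,y) for all t > 0. If x ≤ y with x ≠ y, then there exist t₀ > 0 and open neighborhoods U of x and V of y such that φ(t,u) ≪ φ(t,v) for all u ∈ U, v ∈ V, and all t ≥ t₀. -/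
/-!
At time `1` the two orbits are strongly ordered, `φ 1 x ≪ φ 1 y`, and openness of `≪` gives
neighborhoods of these points that are pointwise strongly ordered; their preimages under the
continuous map `φ 1` are the required `U` and `V`. It remains to see that `≪` is preserved by the
semiflow. For distinct points this is strong monotonicity. A point with `w ≪ w` is isolated,
since a neighborhood `W₁ × W₂` of `(w, w)` inside `≪ ⊆ ≤` forces `W₁ ∩ W₂ = {w}` by
antisymmetry; the orbit of `w`, being a connected set through `w`, is then `{w}`.
-/

theorem isOpen_singleton_of_rel_self {X : Type*} [TopologicalSpace X] [PartialOrder X]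
    {r : X → X → Prop} (hr_le : ∀ a b, r a b → a ≤ b)
    (hr_open : ∀ a b, r a b → ∃ U V : Set X, IsOpen U ∧ IsOpen V ∧ a ∈ U ∧ b ∈ V ∧
      ∀ u ∈ U, ∀ v ∈ V, r u v)
    {w : X} (hw : r w w) : IsOpen ({w} : Set X) := by
  obtain ⟨W₁, W₂, hW₁, hW₂, hw₁, hw₂, hr⟩ := hr_open w w hw
  have hinter : W₁ ∩ W₂ = {w} := by
    refine Set.eq_singleton_iff_unique_mem.mpr ⟨⟨hw₁, hw₂⟩, ?_⟩
    rintro z ⟨hz₁, hz₂⟩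
    exact le_antisymm (hr_le _ _ (hr z hz₁ w hw₂)) (hr_le _ _ (hr w hw₁ z hz₂))
  exact hinter ▸ hW₁.inter hW₂

theorem Continuous.apply_eq_of_isOpen_singleton {α X : Type*} [TopologicalSpace α]
    [PreconnectedSpace α] [TopologicalSpace X] [T1Space X] {f : α → X} (hf : Continuous f) {a : α}
    (ha : IsOpen ({f a} : Set X)) (b : α) : f b = f a := by
  have hclopen : IsClopen (f ⁻¹' {f a}) :=
    ⟨isClosed_singleton.preimage hf, ha.preimage hf⟩
  have hb : b ∈ f ⁻¹' {f a} := hclopen.eq_univ ⟨a, rfl⟩ ▸ Set.mem_univ b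
  exact hb

theorem rel_semiflow_of_rel {X : Type*} [TopologicalSpace X] [T1Space X] [PartialOrder X]
    {r : X → X → Prop} (hr_le : ∀ a b, r a b → a ≤ b)
    (hr_open : ∀ a b, r a b → ∃ U V : Set X, IsOpen U ∧ IsOpen V ∧ a ∈ U ∧ b ∈ V ∧
      ∀ u ∈ U, ∀ v ∈ V, r u v)
    {φ : ℝ → X → X} (hφc : ∀ w, Continuous fun s => φ s w) (hφ0 : ∀ w, φ 0 w = w)
    (hmono : ∀ x y : X, x ≤ y → x ≠ y → ∀ t : ℝ, 0 < t → r (φ t x) (φ t y))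
    {u v : X} (huv : r u v) {s : ℝ} (hs : 0 ≤ s) : r (φ s u) (φ s v) := by
  rcases hs.eq_or_lt with rfl | hs
  · rwa [hφ0, hφ0]
  by_cases hne : u = v
  · subst hne
    have hfix : φ s u = u := by
      have hopen : IsOpen ({φ 0 u} : Set X) := by
        rw [hφ0]; exact isOpen_singleton_of_rel_self hr_le hr_open huv
      rw [(hφc u).apply_eq_of_isOpen_singleton hopen s, hφ0]
    rwa [hfix]
  · exact hmono u v (hr_le u v huv) hne s hs

theorem uniform_separation_general {X : Type*} [MetricSpace X] [PartialOrder X]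
    (lt : X → X → Prop)
    (hlt_le : ∀ a b, lt a b → a ≤ b)
    (hopen : ∀ a b, lt a b → ∃ U V : Set X, IsOpen U ∧ IsOpen V ∧ a ∈ U ∧ b ∈ V ∧
      ∀ u ∈ U, ∀ v ∈ V, lt u v)
    (φ : ℝ → X → X)
    (hφc : Continuous fun q : ℝ × X => φ q.1 q.2)
    (hφ0 : ∀ x, φ 0 x = x)
    (hφadd : ∀ s t : ℝ, 0 ≤ s → 0 ≤ t → ∀ x, φ (s + t) x = φ s (φ t x))
    (hmono : ∀ x y : X, x ≤ y → x ≠ y → ∀ t : ℝ, 0 < t → lt (φ t x) (φ t y))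
    (x y : X) (hxy : x ≤ y) (hne : x ≠ y) :
    ∃ t₀ : ℝ, 0 < t₀ ∧ ∃ U V : Set X, IsOpen U ∧ IsOpen V ∧ x ∈ U ∧ y ∈ V ∧
      ∀ u ∈ U, ∀ v ∈ V, ∀ t : ℝ, t₀ ≤ t → lt (φ t u) (φ t v) := by
  have hφ1 : Continuous (φ 1) := hφc.comp (continuous_const.prodMk continuous_id)
  have hφorbit (w : X) : Continuous fun s => φ s w :=
    hφc.comp (continuous_id.prodMk continuous_const)
  obtain ⟨U, V, hU, hV, hxU, hyV, hUV⟩ := hopen _ _ (hmono x y hxy hne 1 one_pos)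
  refine ⟨1, one_pos, φ 1 ⁻¹' U, φ 1 ⁻¹' V, hU.preimage hφ1, hV.preimage hφ1, hxU, hyV,
    ?_⟩
  intro u hu v hv t ht
  obtain ⟨s, hs, rfl⟩ : ∃ s, 0 ≤ s ∧ t = s + 1 := ⟨t - 1, by linarith, by ring⟩
  rw [hφadd s 1 hs zero_le_one, hφadd s 1 hs zero_le_one]
  exact rel_semiflow_of_rel hlt_le hopen hφorbit hφ0 hmono (hUV _ hu _ hv) hs

/-- Uniform separation for strongly monotone semiflows: if `x ≤ y`, `x ≠ y`,
then some open neighborhoods are eventually strongly ordered pointwise. -/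
theorem uniform_separation {X : Type*} [MetricSpace X] [PartialOrder X]
    (lt : X → X → Prop)
    (hclosed : IsClosed {q : X × X | q.1 ≤ q.2})
    (hlt_le : ∀ a b, lt a b → a ≤ b)
    (hopen : ∀ a b, lt a b → ∃ U V : Set X, IsOpen U ∧ IsOpen V ∧ a ∈ U ∧ b ∈ V ∧
      ∀ u ∈ U, ∀ v ∈ V, lt u v)
    (φ : ℝ → X → X)
    (hφc : Continuous fun q : ℝ × X => φ q.1 q.2)
    (hφ0 : ∀ x, φ 0 x = x)
    (hφadd : ∀ s t : ℝ, 0 ≤ s → 0 ≤ t → ∀ x, φ (s + t) x = φ s (φ t x))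
    (hmono : ∀ x y : X, x ≤ y → x ≠ y → ∀ t : ℝ, 0 < t → lt (φ t x) (φ t y))
    (x y : X) (hxy : x ≤ y) (hne : x ≠ y) :
    ∃ t₀ : ℝ, 0 < t₀ ∧ ∃ U V : Set X, IsOpen U ∧ IsOpen V ∧ x ∈ U ∧ y ∈ V ∧
      ∀ u ∈ U, ∀ v ∈ V, ∀ t : ℝ, t₀ ≤ t → lt (φ t u) (φ t v) :=
  uniform_separation_general lt hlt_le hopen φ hφc hφ0 hφadd hmono x y hxy hne
end

section
/- Let φ be a strongly monotone continuous semiflow on a metric space X (with relations ≤ and ≪ as in the context) such that the relation ≪ is quasi-closed: aₙ ≪ bₙ, aₙ → a, bₙ → b imply a ≤ b. Suppose x ≤ y with x ≠ y, and there exist tₖ → ∞ and a point p with φ(tₖ, x) → p and φ(tₖ, y) → p. Then p is an equilibrium: φ(t,p) = p for all t ≥ 0. -/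
open Filter Topology

/-- If two distinct ordered points have orbits that approach a common point `p`
along a common time sequence `tₖ → ∞`, then `p` is an equilibrium. -/
theorem common_limit_is_equilibrium {X : Type*} [MetricSpace X] [PartialOrder X]
    (lt : X → X → Prop)
    (hlt_le : ∀ a b, lt a b → a ≤ b)
    (hlt_ne : ∀ a b, lt a b → a ≠ b)
    (hopen : ∀ a b, lt a b → ∃ U V : Set X, IsOpen U ∧ IsOpen V ∧ a ∈ U ∧ b ∈ V ∧
      ∀ u ∈ U, ∀ v ∈ V, lt u v)
    (hquasi : ∀ (a b : X) (u v : ℕ → X), (∀ n, lt (u n) (v n)) →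
      Tendsto u atTop (𝓝 a) → Tendsto v atTop (𝓝 b) → a ≤ b)
    (φ : ℝ → X → X)
    (hφc : Continuous fun q : ℝ × X => φ q.1 q.2)
    (hφ0 : ∀ x, φ 0 x = x)
    (hφadd : ∀ s t : ℝ, 0 ≤ s → 0 ≤ t → ∀ x, φ (s + t) x = φ s (φ t x))
    (hmono : ∀ x y : X, x ≤ y → x ≠ y → ∀ t : ℝ, 0 < t → lt (φ t x) (φ t y))
    (x y : X) (hxy : x ≤ y) (hne : x ≠ y)
    (tk : ℕ → ℝ) (htk : Tendsto tk atTop atTop) (htk0 : ∀ k, 0 ≤ tk k)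
    (p : X)
    (hx : Tendsto (fun k => φ (tk k) x) atTop (𝓝 p))
    (hy : Tendsto (fun k => φ (tk k) y) atTop (𝓝 p)) :
    ∀ t : ℝ, 0 ≤ t → φ t p = p := by
  -- continuity of the time-t maps and of the orbit maps
  have cφt : ∀ s : ℝ, Continuous (φ s) := fun s =>
    hφc.comp (Continuous.prodMk_right s)
  have cφz : ∀ z : X, Continuous (fun s : ℝ => φ s z) := fun z =>
    hφc.comp (continuous_id.prodMk continuous_const)
  -- step 1: φ 1 x ≪ φ 1 y
  have hm1 : lt (φ 1 x) (φ 1 y) := hmono x y hxy hne 1 one_pos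
  obtain ⟨U, V, hU, hV, haU, hbV, hUV⟩ := hopen _ _ hm1
  -- step 2: find ε > 0 with φ s (φ 1 y) ∈ V and φ s (φ 1 x) ∈ U for |s| < ε
  have hVnb : ∀ᶠ s in 𝓝 (0:ℝ), φ s (φ 1 y) ∈ V := by
    have : ContinuousAt (fun s : ℝ => φ s (φ 1 y)) 0 := (cφz (φ 1 y)).continuousAt
    have h0 : φ (0:ℝ) (φ 1 y) ∈ V := by rw [hφ0]; exact hbV
    exact this (hV.mem_nhds h0)
  have hUnb : ∀ᶠ s in 𝓝 (0:ℝ), φ s (φ 1 x) ∈ U := by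
    have : ContinuousAt (fun s : ℝ => φ s (φ 1 x)) 0 := (cφz (φ 1 x)).continuousAt
    have h0 : φ (0:ℝ) (φ 1 x) ∈ U := by rw [hφ0]; exact haU
    exact this (hU.mem_nhds h0)
  obtain ⟨ε1, hε1, hball1⟩ := Metric.eventually_nhds_iff.mp hVnb
  obtain ⟨ε2, hε2, hball2⟩ := Metric.eventually_nhds_iff.mp hUnb
  set δ : ℝ := min ε1 ε2 / 2 with hδdef
  have hδpos : 0 < δ := by positivity
  have hδmem : ∀ s : ℝ, 0 ≤ s → s ≤ δ → φ s (φ 1 y) ∈ V ∧ φ s (φ 1 x) ∈ U := by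
    intro s hs0 hsδ
    have h1 : s < ε1 := by
      have : δ < ε1 := by
        have := min_le_left ε1 ε2
        nlinarith [lt_min hε1 hε2]
      linarith
    have h2 : s < ε2 := by
      have : δ < ε2 := by
        have := min_le_right ε1 ε2
        nlinarith [lt_min hε1 hε2]
      linarith
    have hd1 : dist s (0:ℝ) < ε1 := by
      rw [Real.dist_eq, sub_zero, abs_of_nonneg hs0]; exact h1
    have hd2 : dist s (0:ℝ) < ε2 := by
      rw [Real.dist_eq, sub_zero, abs_of_nonneg hs0]; exact h2
    exact ⟨hball1 hd1, hball2 hd2⟩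
  -- step 3: pick K with tk k ≥ 2 for k ≥ K
  obtain ⟨K, hK⟩ := (htk.eventually_ge_atTop 2).exists_forall_of_atTop
  -- key algebraic identities
  have key : ∀ s : ℝ, 0 ≤ s → s ≤ δ → φ s p = p := by
    intro s hs0 hsδ
    obtain ⟨hsV, hsU⟩ := hδmem s hs0 hsδ
    -- for k ≥ K, write T = tk k - 1 > 0
    have hrel : ∀ k : ℕ,
        lt (φ (tk (k + K)) x) (φ s (φ (tk (k + K)) y)) ∧
        lt (φ s (φ (tk (k + K)) x)) (φ (tk (k + K)) y) := by
      intro k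
      have h2 : 2 ≤ tk (k + K) := hK (k + K) (Nat.le_add_left K k)
      set T : ℝ := tk (k + K) - 1 with hT
      have hTpos : 0 < T := by simp [hT]; linarith
      have hT0 : (0:ℝ) ≤ T := le_of_lt hTpos
      have eTx : φ (tk (k + K)) x = φ T (φ 1 x) := by
        have : tk (k + K) = T + 1 := by ring
        rw [this, hφadd T 1 hT0 zero_le_one]
      have eTy : φ (tk (k + K)) y = φ T (φ 1 y) := by
        have : tk (k + K) = T + 1 := by ring
        rw [this, hφadd T 1 hT0 zero_le_one]
      have eSy : φ s (φ (tk (k + K)) y) = φ T (φ s (φ 1 y)) := by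
        rw [eTy, ← hφadd s T hs0 hT0, ← hφadd T s hT0 hs0, add_comm]
      have eSx : φ s (φ (tk (k + K)) x) = φ T (φ s (φ 1 x)) := by
        rw [eTx, ← hφadd s T hs0 hT0, ← hφadd T s hT0 hs0, add_comm]
      constructor
      · have hlt1 : lt (φ 1 x) (φ s (φ 1 y)) := hUV _ haU _ hsV
        rw [eTx, eSy]
        exact hmono _ _ (hlt_le _ _ hlt1) (hlt_ne _ _ hlt1) T hTpos
      · have hlt2 : lt (φ s (φ 1 x)) (φ 1 y) := hUV _ hsU _ hbV
        rw [eSx, eTy]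
        exact hmono _ _ (hlt_le _ _ hlt2) (hlt_ne _ _ hlt2) T hTpos
    -- limits of the shifted sequences
    have hx' : Tendsto (fun k => φ (tk (k + K)) x) atTop (𝓝 p) :=
      hx.comp (tendsto_add_atTop_nat K)
    have hy' : Tendsto (fun k => φ (tk (k + K)) y) atTop (𝓝 p) :=
      hy.comp (tendsto_add_atTop_nat K)
    have hxs : Tendsto (fun k => φ s (φ (tk (k + K)) x)) atTop (𝓝 (φ s p)) :=
      ((cφt s).tendsto p).comp hx'
    have hys : Tendsto (fun k => φ s (φ (tk (k + K)) y)) atTop (𝓝 (φ s p)) :=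
      ((cφt s).tendsto p).comp hy'
    have le1 : p ≤ φ s p :=
      hquasi p (φ s p) _ _ (fun k => (hrel k).1) hx' hys
    have le2 : φ s p ≤ p :=
      hquasi (φ s p) p _ _ (fun k => (hrel k).2) hxs hy'
    exact le_antisymm le2 le1
  -- step 4: extend from [0, δ] to all t ≥ 0
  have hn : ∀ n : ℕ, ∀ t : ℝ, 0 ≤ t → t ≤ (n + 1) * δ → φ t p = p := by
    intro n
    induction n with
    | zero => intro t ht0 htδ; exact key t ht0 (by simpa using htδ)
    | succ m ih =>
      intro t ht0 htδ
      by_cases hcase : t ≤ (m + 1) * δ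
      · exact ih t ht0 hcase
      · push_neg at hcase
        have htδ' : δ ≤ t := by
          have hm0 : (0:ℝ) ≤ (m:ℝ) := Nat.cast_nonneg m
          nlinarith
        have h1 : (0:ℝ) ≤ t - δ := by linarith
        have h2 : t - δ ≤ (m + 1) * δ := by
          push_cast at htδ ⊢
          linarith
        have heq : φ t p = φ δ (φ (t - δ) p) := by
          have h := hφadd δ (t - δ) (le_of_lt hδpos) h1 p
          rwa [show δ + (t - δ) = t by ring] at h
        rw [heq, ih (t - δ) h1 h2, key δ (le_of_lt hδpos) le_rfl]
  intro t ht
  obtain ⟨n, hnn⟩ := exists_nat_ge (t / δ)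
  have : t ≤ n * δ := by
    rw [div_le_iff₀ hδpos] at hnn
    linarith
  exact hn n t ht (by push_cast; nlinarith [hδpos.le])
end

section
/- Let φ be a strongly monotone continuous semiflow on a metric space X with closed partial order ≤ and open strict relation ≪ ⊆ ≤, with all orbits having compact closure. Suppose a point x satisfies x ≤ φ(T, x) and x ≠ φ(T, x) for some T > 0. Then φ(t, x) converges as t → ∞ to an equilibrium point p. -/
/-!
Put `y = φ T x`, so that `y ≪ φ T y`; since `≪` is open, `y ≪ φ s y` for every `s` near `T`.
For each such `s` the sequence `φ (n s) y` is monotone in a compact set, hence converges to a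
point fixed by `φ s`, and every ω-limit point of `y` lies on the orbit of that `s`-periodic point,
so is itself `s`-periodic. Thus the limit `p` of `φ (n T) y` is fixed by `φ s` for all `s` in an
interval, hence is an equilibrium; since every ω-limit point of `y` lies on the orbit of `p`,
the precompact orbit of `y` converges to `p`.
-/

open Filter Topology Set Function

theorem Monotone.exists_tendsto_of_isCompact {X ι : Type*} [TopologicalSpace X] [PartialOrder X]
    [OrderClosedTopology X] [SemilatticeSup ι] [Nonempty ι] {a : ι → X} (ha : Monotone a)
    {K : Set X} (hK : IsCompact K) (haK : ∀ i, a i ∈ K) : ∃ p, Tendsto a atTop (𝓝 p) := by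
  have hub : ∀ q, MapClusterPt q atTop a → ∀ i, a i ≤ q := fun q hq i =>
    isClosed_Ici.mem_of_mapClusterPt hq ((eventually_ge_atTop i).mono fun _ hj => ha hj)
  obtain ⟨p, -, hp⟩ := hK.exists_mapClusterPt (f := atTop) (tendsto_principal.2 (.of_forall haK))
  refine ⟨p, hK.tendsto_nhds_of_unique_mapClusterPt (.of_forall haK) fun q _ hq => ?_⟩
  exact le_antisymm (isClosed_Iic.mem_of_mapClusterPt hq (.of_forall (hub p hp)))
    (isClosed_Iic.mem_of_mapClusterPt hp (.of_forall (hub q hq)))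

theorem Monotone.exists_isFixedPt_tendsto_iterate {X : Type*} [TopologicalSpace X] [T2Space X]
    [PartialOrder X] [OrderClosedTopology X] {f : X → X} (hf : Monotone f) (hfc : Continuous f)
    {x : X} (hx : x ≤ f x) {K : Set X} (hK : IsCompact K) (hxK : ∀ n, f^[n] x ∈ K) :
    ∃ p, IsFixedPt f p ∧ Tendsto (fun n => f^[n] x) atTop (𝓝 p) := by
  obtain ⟨p, hp⟩ := (hf.monotone_iterate_of_le_map hx).exists_tendsto_of_isCompact hK hxK
  exact ⟨p, isFixedPt_of_tendsto_iterate hp hfc.continuousAt, hp⟩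

theorem ContinuousAt.eventually_rel {X α : Type*} [TopologicalSpace X] [TopologicalSpace α]
    {lt : X → X → Prop}
    (hopen : ∀ a b, lt a b → ∃ U V : Set X, IsOpen U ∧ IsOpen V ∧ a ∈ U ∧ b ∈ V ∧
      ∀ u ∈ U, ∀ v ∈ V, lt u v)
    {f : α → X} {t : α} (hf : ContinuousAt f t) {a : X} (h : lt a (f t)) :
    ∀ᶠ s in 𝓝 t, lt a (f s) := by
  obtain ⟨U, V, -, hV, haU, hfV, hUV⟩ := hopen _ _ h
  exact Eventually.mono (hf.preimage_mem_nhds (hV.mem_nhds hfV)) fun s hs => hUV a haU _ hs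

theorem sub_natFloor_div_mul_mem_Icc {s t : ℝ} (hs : 0 < s) (ht : 0 ≤ t) :
    t - ⌊t / s⌋₊ * s ∈ Icc 0 s := by
  have h₁ : (⌊t / s⌋₊ : ℝ) * s ≤ t := (le_div_iff₀ hs).1 (Nat.floor_le (div_nonneg ht hs.le))
  have h₂ : t < (⌊t / s⌋₊ + 1) * s := (div_lt_iff₀ hs).1 (Nat.lt_floor_add_one _)
  rw [add_mul, one_mul] at h₂
  constructor <;> linarith

section Semiflow

variable {X : Type*} {φ : ℝ → X → X}

def IsEquilibrium (φ : ℝ → X → X) (p : X) : Prop :=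
  ∀ t, 0 ≤ t → φ t p = p

theorem flow_comm (hφadd : ∀ s t : ℝ, 0 ≤ s → 0 ≤ t → ∀ x, φ (s + t) x = φ s (φ t x))
    {s t : ℝ} (hs : 0 ≤ s) (ht : 0 ≤ t) (y : X) : φ s (φ t y) = φ t (φ s y) := by
  rw [← hφadd s t hs ht, ← hφadd t s ht hs, add_comm]

theorem flow_nat_mul_eq_iterate (hφ0 : ∀ x, φ 0 x = x)
    (hφadd : ∀ s t : ℝ, 0 ≤ s → 0 ≤ t → ∀ x, φ (s + t) x = φ s (φ t x))
    {s : ℝ} (hs : 0 ≤ s) (y : X) (n : ℕ) : φ (n * s) y = (φ s)^[n] y := by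
  induction n with
  | zero => simp [hφ0]
  | succ n ih =>
    rw [iterate_succ_apply', ← ih, ← hφadd s _ hs (by positivity)]
    congr 1
    push_cast
    ring

theorem flow_eq_flow_sub_natFloor
    (hφadd : ∀ s t : ℝ, 0 ≤ s → 0 ≤ t → ∀ x, φ (s + t) x = φ s (φ t x))
    {s t : ℝ} (hs : 0 < s) (ht : 0 ≤ t) (y : X) :
    φ t y = φ (t - ⌊t / s⌋₊ * s) (φ (⌊t / s⌋₊ * s) y) := by
  rw [← hφadd _ _ (sub_natFloor_div_mul_mem_Icc hs ht).1 (by positivity), sub_add_cancel]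

theorem isEquilibrium_of_forall_mem_Icc (hφ0 : ∀ x, φ 0 x = x)
    (hφadd : ∀ s t : ℝ, 0 ≤ s → 0 ≤ t → ∀ x, φ (s + t) x = φ s (φ t x))
    {c : ℝ} (hc : 0 < c) {p : X} (h : ∀ r ∈ Icc 0 c, φ r p = p) : IsEquilibrium φ p := by
  intro t ht
  have hfix : IsFixedPt (φ c) p := h c ⟨hc.le, le_rfl⟩
  rw [flow_eq_flow_sub_natFloor hφadd hc ht, flow_nat_mul_eq_iterate hφ0 hφadd hc.le,
    (hfix.iterate _).eq]
  exact h _ (sub_natFloor_div_mul_mem_Icc hc ht)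

theorem isEquilibrium_of_eventually_flow_eq (hφ0 : ∀ x, φ 0 x = x)
    (hφadd : ∀ s t : ℝ, 0 ≤ s → 0 ≤ t → ∀ x, φ (s + t) x = φ s (φ t x))
    {T : ℝ} (hT : 0 < T) {p : X} (h : ∀ᶠ s in 𝓝 T, φ s p = p) : IsEquilibrium φ p := by
  obtain ⟨δ, hδ, hfix⟩ := Metric.eventually_nhds_iff.1 h
  obtain ⟨c, hc, hcδT⟩ := exists_between (lt_min hδ hT)
  rw [lt_min_iff] at hcδT
  have hTc : φ (T - c) p = p := hfix (by rw [Real.dist_eq, abs_lt]; constructor <;> linarith)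
  refine isEquilibrium_of_forall_mem_Icc hφ0 hφadd hc fun r hr => ?_
  calc φ r p = φ r (φ (T - c) p) := by rw [hTc]
    _ = φ (r + (T - c)) p := (hφadd _ _ hr.1 (by linarith) p).symm
    _ = p := hfix (by rw [Real.dist_eq, abs_lt]; constructor <;> linarith [hr.1, hr.2])

theorem monotone_flow_of_stronglyMonotone [PartialOrder X] {lt : X → X → Prop}
    (hlt_le : ∀ a b, lt a b → a ≤ b) (hφ0 : ∀ x, φ 0 x = x)
    (hmono : ∀ x y : X, x ≤ y → x ≠ y → ∀ t : ℝ, 0 < t → lt (φ t x) (φ t y))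
    {t : ℝ} (ht : 0 ≤ t) : Monotone (φ t) := by
  intro a b hab
  rcases eq_or_ne a b with rfl | hne
  · exact le_rfl
  rcases ht.lt_or_eq with ht | rfl
  · exact hlt_le _ _ (hmono a b hab hne t ht)
  · rwa [hφ0, hφ0]

theorem tendsto_flow_of_tendsto_flow_flow
    (hφadd : ∀ s t : ℝ, 0 ≤ s → 0 ≤ t → ∀ x, φ (s + t) x = φ s (φ t x))
    {T : ℝ} (hT : 0 ≤ T) {x : X} {l : Filter X}
    (h : Tendsto (fun t => φ t (φ T x)) atTop l) : Tendsto (fun t => φ t x) atTop l := by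
  refine (h.comp (tendsto_atTop_add_const_right _ (-T) tendsto_id)).congr' ?_
  filter_upwards [eventually_ge_atTop T] with t ht
  simp only [comp_apply, id, ← sub_eq_add_neg]
  rw [← hφadd _ _ (by linarith) hT, sub_add_cancel]

variable [TopologicalSpace X]

theorem exists_isFixedPt_tendsto_flow_nat_mul [T2Space X] [PartialOrder X]
    [OrderClosedTopology X] (hφc : Continuous fun q : ℝ × X => φ q.1 q.2)
    (hφ0 : ∀ x, φ 0 x = x)
    (hφadd : ∀ s t : ℝ, 0 ≤ s → 0 ≤ t → ∀ x, φ (s + t) x = φ s (φ t x))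
    {s : ℝ} (hs : 0 ≤ s) (hφs : Monotone (φ s)) {y : X} (hy : y ≤ φ s y) {K : Set X}
    (hK : IsCompact K) (hyK : ∀ t, 0 ≤ t → φ t y ∈ K) :
    ∃ π, IsFixedPt (φ s) π ∧ Tendsto (fun n : ℕ => φ (n * s) y) atTop (𝓝 π) := by
  simp_rw [flow_nat_mul_eq_iterate hφ0 hφadd hs]
  refine hφs.exists_isFixedPt_tendsto_iterate (hφc.comp (Continuous.prodMk_right s)) hy hK
    fun n => ?_
  rw [← flow_nat_mul_eq_iterate hφ0 hφadd hs]
  exact hyK _ (by positivity)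

theorem exists_flow_eq_of_mapClusterPt [T2Space X] [FirstCountableTopology X]
    (hφc : Continuous fun q : ℝ × X => φ q.1 q.2)
    (hφadd : ∀ s t : ℝ, 0 ≤ s → 0 ≤ t → ∀ x, φ (s + t) x = φ s (φ t x))
    {s : ℝ} (hs : 0 < s) {y π q : X} (hπ : Tendsto (fun n : ℕ => φ (n * s) y) atTop (𝓝 π))
    (hq : MapClusterPt q atTop fun t => φ t y) : ∃ r ∈ Icc 0 s, φ r π = q := by
  obtain ⟨u, hqu, hu⟩ := hq.exists_seq_tendsto
  set n : ℕ → ℕ := fun j => ⌊u j / s⌋₊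
  set r : ℕ → ℝ := fun j => u j - n j * s
  have hu₀ : ∀ᶠ j in atTop, 0 ≤ u j := hu.eventually_ge_atTop 0
  have hr : ∀ᶠ j in atTop, r j ∈ Icc 0 s :=
    hu₀.mono fun j hj => sub_natFloor_div_mul_mem_Icc hs hj
  obtain ⟨r₀, hr₀, ψ, hψ, hrψ⟩ := isCompact_Icc.tendsto_subseq' hr.frequently
  have hn : Tendsto (n ∘ ψ) atTop atTop :=
    tendsto_nat_floor_atTop.comp ((hu.atTop_div_const hs).comp hψ.tendsto_atTop)
  have hlim : Tendsto (fun k => φ (r (ψ k)) (φ (n (ψ k) * s) y)) atTop (𝓝 (φ r₀ π)) :=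
    (hφc.tendsto (r₀, π)).comp (hrψ.prodMk_nhds (hπ.comp hn))
  refine ⟨r₀, hr₀, tendsto_nhds_unique (hlim.congr' ?_) (hqu.comp hψ.tendsto_atTop)⟩
  filter_upwards [hψ.tendsto_atTop.eventually hu₀] with k hk
  exact (flow_eq_flow_sub_natFloor hφadd hs hk y).symm

theorem isFixedPt_flow_of_mapClusterPt [T2Space X] [FirstCountableTopology X] [PartialOrder X]
    [OrderClosedTopology X] (hφc : Continuous fun q : ℝ × X => φ q.1 q.2)
    (hφ0 : ∀ x, φ 0 x = x)
    (hφadd : ∀ s t : ℝ, 0 ≤ s → 0 ≤ t → ∀ x, φ (s + t) x = φ s (φ t x))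
    {s : ℝ} (hs : 0 < s) (hφs : Monotone (φ s)) {y : X} (hy : y ≤ φ s y) {K : Set X}
    (hK : IsCompact K) (hyK : ∀ t, 0 ≤ t → φ t y ∈ K) {q : X}
    (hq : MapClusterPt q atTop fun t => φ t y) : IsFixedPt (φ s) q := by
  obtain ⟨π, hπ, hπlim⟩ :=
    exists_isFixedPt_tendsto_flow_nat_mul hφc hφ0 hφadd hs.le hφs hy hK hyK
  obtain ⟨r, hr, rfl⟩ := exists_flow_eq_of_mapClusterPt hφc hφadd hs hπlim hq
  rw [IsFixedPt, flow_comm hφadd hs.le hr.1, hπ.eq]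

end Semiflow

theorem convergence_criterion_general {X : Type*} [MetricSpace X] [PartialOrder X]
    (lt : X → X → Prop)
    (hclosed : IsClosed {q : X × X | q.1 ≤ q.2})
    (hlt_le : ∀ a b, lt a b → a ≤ b)
    (hopen : ∀ a b, lt a b → ∃ U V : Set X, IsOpen U ∧ IsOpen V ∧ a ∈ U ∧ b ∈ V ∧
      ∀ u ∈ U, ∀ v ∈ V, lt u v)
    (φ : ℝ → X → X)
    (hφc : Continuous fun q : ℝ × X => φ q.1 q.2)
    (hφ0 : ∀ x, φ 0 x = x)
    (hφadd : ∀ s t : ℝ, 0 ≤ s → 0 ≤ t → ∀ x, φ (s + t) x = φ s (φ t x))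
    (hmono : ∀ x y : X, x ≤ y → x ≠ y → ∀ t : ℝ, 0 < t → lt (φ t x) (φ t y))
    (hcompact : ∀ z : X, IsCompact (closure {w | ∃ t : ℝ, 0 ≤ t ∧ φ t z = w}))
    (x : X) (T : ℝ) (hT : 0 < T)
    (hord : x ≤ φ T x) (hne : x ≠ φ T x) :
    ∃ p : X, (∀ t : ℝ, 0 ≤ t → φ t p = p) ∧
      Tendsto (fun t : ℝ => φ t x) atTop (𝓝 p) := by
  have : OrderClosedTopology X := ⟨hclosed⟩
  set y := φ T x
  have hyK : ∀ t, 0 ≤ t → φ t y ∈ closure {w | ∃ t : ℝ, 0 ≤ t ∧ φ t y = w} :=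
    fun t ht => subset_closure ⟨t, ht, rfl⟩
  have hφmono : ∀ t, 0 ≤ t → Monotone (φ t) := fun _ =>
    monotone_flow_of_stronglyMonotone hlt_le hφ0 hmono
  have hnear : ∀ᶠ s in 𝓝 T, lt y (φ s y) :=
    (hφc.comp (Continuous.prodMk_left y)).continuousAt.eventually_rel hopen
      (hmono x y hord hne T hT)
  obtain ⟨p, -, hp⟩ := exists_isFixedPt_tendsto_flow_nat_mul hφc hφ0 hφadd hT.le (hφmono _ hT.le)
    (hlt_le _ _ hnear.self_of_nhds) (hcompact y) hyK
  have hp_cluster : MapClusterPt p atTop (fun t => φ t y) :=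
    hp.mapClusterPt.of_comp (tendsto_natCast_atTop_atTop.atTop_mul_const hT)
  have hp_eq : IsEquilibrium φ p := isEquilibrium_of_eventually_flow_eq hφ0 hφadd hT <|
    ((eventually_gt_nhds hT).and hnear).mono fun s hs =>
      isFixedPt_flow_of_mapClusterPt hφc hφ0 hφadd hs.1 (hφmono _ hs.1.le) (hlt_le _ _ hs.2)
        (hcompact y) hyK hp_cluster
  refine ⟨p, hp_eq, tendsto_flow_of_tendsto_flow_flow hφadd hT.le ?_⟩
  refine (hcompact y).tendsto_nhds_of_unique_mapClusterPt ((eventually_ge_atTop 0).mono hyK)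
    fun q _ hq => ?_
  obtain ⟨r, hr, rfl⟩ := exists_flow_eq_of_mapClusterPt hφc hφadd hT hp hq
  exact hp_eq r hr.1

/-- Hirsch's convergence criterion: if `x ≤ φ T x` with `x ≠ φ T x` for some
`T > 0` and the orbit of `x` is precompact, then `φ t x` converges to an
equilibrium as `t → ∞`. -/
theorem convergence_criterion {X : Type*} [MetricSpace X] [PartialOrder X]
    (lt : X → X → Prop)
    (hclosed : IsClosed {q : X × X | q.1 ≤ q.2})
    (hlt_le : ∀ a b, lt a b → a ≤ b)
    (hlt_ne : ∀ a b, lt a b → a ≠ b)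
    (hopen : ∀ a b, lt a b → ∃ U V : Set X, IsOpen U ∧ IsOpen V ∧ a ∈ U ∧ b ∈ V ∧
      ∀ u ∈ U, ∀ v ∈ V, lt u v)
    (φ : ℝ → X → X)
    (hφc : Continuous fun q : ℝ × X => φ q.1 q.2)
    (hφ0 : ∀ x, φ 0 x = x)
    (hφadd : ∀ s t : ℝ, 0 ≤ s → 0 ≤ t → ∀ x, φ (s + t) x = φ s (φ t x))
    (hmono : ∀ x y : X, x ≤ y → x ≠ y → ∀ t : ℝ, 0 < t → lt (φ t x) (φ t y))
    (hcompact : ∀ z : X, IsCompact (closure {w | ∃ t : ℝ, 0 ≤ t ∧ φ t z = w}))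
    (x : X) (T : ℝ) (hT : 0 < T)
    (hord : x ≤ φ T x) (hne : x ≠ φ T x) :
    ∃ p : X, (∀ t : ℝ, 0 ≤ t → φ t p = p) ∧
      Tendsto (fun t : ℝ => φ t x) atTop (𝓝 p) :=
  convergence_criterion_general lt hclosed hlt_le hopen φ hφc hφ0 hφadd hmono hcompact x T hT hord
    hne
end

section
/- Let φ be a strongly monotone continuous semiflow on a metric space X with closed partial order ≤ and open strict relation ≪ ⊆ ≤, with all orbits having compact closure. Then no omega-limit set ω(z) contains two distinct points x, y with x ≤ y. -/
/-!
If `x ≤ y`, `x ≠ y` both lie in `ω(z)`, then `φ 1 x ≪ φ 1 y`, so the orbit of `z` keeps returning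
to neighbourhoods `U ∋ φ 1 x`, `V ∋ φ 1 y` with `U ≪ V`. This gives times `a < b < c` with
`φ a z < φ b z > φ c z`. Strong monotonicity transports a strict comparison between two points of the
orbit along time translations, so the orbit increases along steps `b - a` and decreases along
steps `c - b`. As the return times to `U` form an open set, `c` can be chosen with `c - b` a rational
multiple of `b - a`; a common multiple of the two steps then yields `φ T z < φ T z`.
-/

open Filter Topology

def TranslationStrictMono {α : Type*} [Preorder α] (g : ℝ → α) : Prop :=
  ∀ ⦃a b s : ℝ⦄, 0 ≤ a → 0 ≤ b → 0 ≤ s → g a < g b → g (a + s) < g (b + s)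

namespace TranslationStrictMono

variable {α : Type*} [Preorder α] {g : ℝ → α}

theorem dual (hg : TranslationStrictMono g) : TranslationStrictMono (OrderDual.toDual ∘ g) :=
  fun _ _ _ ha hb hs h => hg hb ha hs h

theorem lt_add_mul (hg : TranslationStrictMono g) {t T p : ℝ} (ht : 0 ≤ t) (htT : t ≤ T)
    (hp : 0 ≤ p) (h : g t < g (t + p)) {n : ℕ} (hn : n ≠ 0) : g T < g (T + n * p) := by
  have hT : g T < g (T + p) := by
    convert hg ht (by positivity) (sub_nonneg.2 htT) h using 2 <;> ring
  induction n, Nat.one_le_iff_ne_zero.2 hn using Nat.le_induction with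
  | base => simpa using hT
  | succ n _ ih =>
    calc g T < g (T + n * p) := ih (by omega)
      _ < g (T + p + n * p) := hg (by linarith) (by linarith) (by positivity) hT
      _ = g (T + (n + 1 : ℕ) * p) := by push_cast; ring_nf

theorem irrational_div (hg : TranslationStrictMono g) {t₀ t₁ p q : ℝ} (ht₀ : 0 ≤ t₀)
    (ht₁ : 0 ≤ t₁) (hp : 0 < p) (hq : 0 < q) (hup : g t₀ < g (t₀ + p))
    (hdown : g (t₁ + q) < g t₁) : Irrational (q / p) := by
  rintro ⟨r, hr⟩
  have hr_pos : 0 < r := by exact_mod_cast hr ▸ div_pos hq hp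
  obtain ⟨m, hm⟩ := Int.eq_ofNat_of_zero_le (Rat.num_pos.2 hr_pos).le
  have hm0 : m ≠ 0 := by have := Rat.num_pos.2 hr_pos; omega
  have hsteps : (r.den : ℝ) * q = m * p :=
    calc (r.den : ℝ) * q = (r.den * r : ℝ) * p := by rw [hr]; field_simp
      _ = m * p := by congr 1; exact_mod_cast hm ▸ r.den_mul_eq_num
  have hup' := hg.lt_add_mul ht₀ (le_max_left t₀ t₁) hp.le hup hm0
  have hdown' := hg.dual.lt_add_mul ht₁ (le_max_right t₀ t₁) hq.le hdown r.den_nz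
  rw [← hsteps] at hup'
  exact lt_asymm hup' hdown'

end TranslationStrictMono

theorem translationStrictMono_orbit {X : Type*} [PartialOrder X] {φ : ℝ → X → X}
    (hφadd : ∀ s t : ℝ, 0 ≤ s → 0 ≤ t → ∀ x, φ (s + t) x = φ s (φ t x))
    (hmono : ∀ x y : X, x < y → ∀ t : ℝ, 0 < t → φ t x < φ t y) (z : X) :
    TranslationStrictMono fun t => φ t z := by
  intro a b s ha hb hs h
  rcases hs.eq_or_lt with rfl | hs
  · simpa using h
  · simpa only [add_comm _ s, hφadd s _ hs.le ha, hφadd s _ hs.le hb] using hmono _ _ h s hs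

theorem exists_pos_rat_add_mul_mem {S : Set ℝ} (hS : IsOpen S) (hfreq : ∃ᶠ t in atTop, t ∈ S)
    (b : ℝ) {p : ℝ} (hp : 0 < p) : ∃ r : ℚ, 0 < r ∧ b + r * p ∈ S := by
  obtain ⟨c, hcS, hcb⟩ := (hfreq.and_eventually (eventually_gt_atTop b)).exists
  have hdense : DenseRange fun r : ℚ => b + r * p :=
    (Function.Surjective.denseRange (f := fun t : ℝ => b + t * p)
      fun y => ⟨(y - b) / p, by field_simp; ring⟩).comp Rat.denseRange_cast (by fun_prop)
  obtain ⟨r, hrS, hrb⟩ := hdense.exists_mem_open (hS.inter isOpen_Ioi) ⟨c, hcS, hcb⟩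
  refine ⟨r, ?_, hrS⟩
  have : 0 < (r : ℝ) * p := by simpa using hrb
  exact_mod_cast pos_of_mul_pos_left this hp.le

def omegaLimitSet {X : Type*} [TopologicalSpace X] (φ : ℝ → X → X) (z : X) : Set X :=
  ⋂ (s : ℝ) (_ : 0 ≤ s), closure {w | ∃ t : ℝ, s ≤ t ∧ φ t z = w}

theorem frequently_mem_of_mem_omegaLimitSet {X : Type*} [TopologicalSpace X] {φ : ℝ → X → X}
    {z x : X} {τ : ℝ} {W : Set X} (hφτ : Continuous (φ τ))
    (hφadd : ∀ t : ℝ, 0 ≤ t → φ (τ + t) z = φ τ (φ t z)) (hτ : 0 ≤ τ)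
    (hx : x ∈ omegaLimitSet φ z) (hW : IsOpen W) (hxW : φ τ x ∈ W) :
    ∃ᶠ t in atTop, φ t z ∈ W := by
  refine frequently_atTop.2 fun s => ?_
  have hx' := Set.mem_iInter₂.1 hx (max s 0) (le_max_right _ _)
  obtain ⟨_, hwW, t, hst, rfl⟩ := mem_closure_iff.1 hx' _ (hW.preimage hφτ) hxW
  refine ⟨τ + t, by linarith [le_max_left s 0], ?_⟩
  rwa [hφadd t (le_trans (le_max_right _ _) hst)]

theorem omega_limit_nonordered_general {X : Type*} [MetricSpace X] [PartialOrder X]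
    (lt : X → X → Prop)
    (hlt_le : ∀ a b, lt a b → a ≤ b)
    (hlt_ne : ∀ a b, lt a b → a ≠ b)
    (hopen : ∀ a b, lt a b → ∃ U V : Set X, IsOpen U ∧ IsOpen V ∧ a ∈ U ∧ b ∈ V ∧
      ∀ u ∈ U, ∀ v ∈ V, lt u v)
    (φ : ℝ → X → X)
    (hφc : Continuous fun q : ℝ × X => φ q.1 q.2)
    (hφadd : ∀ s t : ℝ, 0 ≤ s → 0 ≤ t → ∀ x, φ (s + t) x = φ s (φ t x))
    (hmono : ∀ x y : X, x ≤ y → x ≠ y → ∀ t : ℝ, 0 < t → lt (φ t x) (φ t y))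
    (z x y : X)
    (hx : x ∈ ⋂ (s : ℝ) (_ : 0 ≤ s), closure {w | ∃ t : ℝ, s ≤ t ∧ φ t z = w})
    (hy : y ∈ ⋂ (s : ℝ) (_ : 0 ≤ s), closure {w | ∃ t : ℝ, s ≤ t ∧ φ t z = w})
    (hne : x ≠ y) :
    ¬ x ≤ y := by
  intro hxy
  have hlt : ∀ a b, lt a b → a < b := fun a b h => (hlt_le a b h).lt_of_ne (hlt_ne a b h)
  have hg : TranslationStrictMono fun t => φ t z :=
    translationStrictMono_orbit hφadd (fun u v h t ht => hlt _ _ (hmono u v h.le h.ne t ht)) z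
  obtain ⟨U, V, hU, hV, hxU, hyV, hUV⟩ := hopen _ _ (hmono x y hxy hne 1 one_pos)
  have hφ1 : Continuous (φ 1) := hφc.comp (Continuous.prodMk_right 1)
  have hφ1add : ∀ t : ℝ, 0 ≤ t → φ (1 + t) z = φ 1 (φ t z) := fun t ht => hφadd 1 t one_pos.le ht z
  have hfreqU := frequently_mem_of_mem_omegaLimitSet hφ1 hφ1add one_pos.le hx hU hxU
  have hfreqV := frequently_mem_of_mem_omegaLimitSet hφ1 hφ1add one_pos.le hy hV hyV
  obtain ⟨a, haU, ha⟩ := (hfreqU.and_eventually (eventually_ge_atTop 0)).exists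
  obtain ⟨b, hbV, hab⟩ := (hfreqV.and_eventually (eventually_gt_atTop a)).exists
  have hU_times : IsOpen ((fun t => φ t z) ⁻¹' U) :=
    hU.preimage (hφc.comp (continuous_id.prodMk continuous_const))
  obtain ⟨r, hr, hrU⟩ := exists_pos_rat_add_mul_mem hU_times hfreqU b (sub_pos.2 hab)
  refine hg.irrational_div ha (ha.trans hab.le) (sub_pos.2 hab) (by positivity)
    (by simpa using hlt _ _ (hUV _ haU _ hbV)) (hlt _ _ (hUV _ hrU _ hbV)) ⟨r, ?_⟩
  rw [mul_div_cancel_right₀ _ (sub_pos.2 hab).ne']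

/-- Nonordering of omega-limit sets: no omega-limit set of a strongly monotone
semiflow with precompact orbits contains two distinct ordered points. -/
theorem omega_limit_nonordered {X : Type*} [MetricSpace X] [PartialOrder X]
    (lt : X → X → Prop)
    (hclosed : IsClosed {q : X × X | q.1 ≤ q.2})
    (hlt_le : ∀ a b, lt a b → a ≤ b)
    (hlt_ne : ∀ a b, lt a b → a ≠ b)
    (hopen : ∀ a b, lt a b → ∃ U V : Set X, IsOpen U ∧ IsOpen V ∧ a ∈ U ∧ b ∈ V ∧
      ∀ u ∈ U, ∀ v ∈ V, lt u v)
    (φ : ℝ → X → X)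
    (hφc : Continuous fun q : ℝ × X => φ q.1 q.2)
    (hφ0 : ∀ x, φ 0 x = x)
    (hφadd : ∀ s t : ℝ, 0 ≤ s → 0 ≤ t → ∀ x, φ (s + t) x = φ s (φ t x))
    (hmono : ∀ x y : X, x ≤ y → x ≠ y → ∀ t : ℝ, 0 < t → lt (φ t x) (φ t y))
    (hcompact : ∀ z : X, IsCompact (closure {w | ∃ t : ℝ, 0 ≤ t ∧ φ t z = w}))
    (z x y : X)
    (hx : x ∈ ⋂ (s : ℝ) (_ : 0 ≤ s), closure {w | ∃ t : ℝ, s ≤ t ∧ φ t z = w})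
    (hy : y ∈ ⋂ (s : ℝ) (_ : 0 ≤ s), closure {w | ∃ t : ℝ, s ≤ t ∧ φ t z = w})
    (hne : x ≠ y) :
    ¬ x ≤ y :=
  omega_limit_nonordered_general lt hlt_le hlt_ne hopen φ hφc hφadd hmono z x y hx hy hne
end

section
/- Let φ be a strongly monotone continuous semiflow on a metric space X (setting as in the context), with all orbits precompact. Let x, y ∈ X and suppose there exists q ∈ ω(y) with q ∉ ω(x) such that p ≤ q for every p ∈ ω(x). Then ω(x) ∩ ω(y) = ∅ and p ≪ q' for every p ∈ ω(x) and q' ∈ ω(y). -/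
open Filter Topology

section AbsorptionAux

variable {X : Type*} [MetricSpace X]


private lemma cont_t (φ : ℝ → X → X) (hφc : Continuous fun q : ℝ × X => φ q.1 q.2) (t : ℝ) :
    Continuous fun z => φ t z :=
  hφc.comp (continuous_const.prodMk continuous_id)

private lemma cont_x (φ : ℝ → X → X) (hφc : Continuous fun q : ℝ × X => φ q.1 q.2) (z : X) :
    Continuous fun t => φ t z :=
  hφc.comp (continuous_id.prodMk continuous_const)

private lemma omega_visit (φ : ℝ → X → X) (ω : X → Set X)
    (hω : ∀ z, ω z = ⋂ (s : ℝ) (_ : 0 ≤ s), closure {w | ∃ t : ℝ, s ≤ t ∧ φ t z = w})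
    {z w : X} (hz : z ∈ ω w) (s : ℝ) {ε : ℝ} (hε : 0 < ε) :
    ∃ t : ℝ, s ≤ t ∧ dist (φ t w) z < ε := by
  rw [hω] at hz
  have h := Set.mem_iInter₂.mp hz (max s 0) (le_max_right _ _)
  rcases Metric.mem_closure_iff.mp h ε hε with ⟨b, ⟨t, ht, rfl⟩, hd⟩
  exact ⟨t, le_trans (le_max_left s 0) ht, by rwa [dist_comm]⟩

private lemma omega_of_seq (φ : ℝ → X → X) (ω : X → Set X)
    (hω : ∀ z, ω z = ⋂ (s : ℝ) (_ : 0 ≤ s), closure {w | ∃ t : ℝ, s ≤ t ∧ φ t z = w})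
    {z w : X} (ts : ℕ → ℝ) (hts : ∀ n : ℕ, (n : ℝ) ≤ ts n)
    (hconv : Tendsto (fun n => φ (ts n) w) atTop (𝓝 z)) : z ∈ ω w := by
  rw [hω]
  refine Set.mem_iInter₂.mpr fun s hs => Metric.mem_closure_iff.mpr fun ε hε => ?_
  rcases Metric.tendsto_atTop.mp hconv ε hε with ⟨N, hN⟩
  refine ⟨φ (ts (max N ⌈s⌉₊)) w, ⟨ts (max N ⌈s⌉₊), ?_, rfl⟩, ?_⟩
  · calc s ≤ (⌈s⌉₊ : ℝ) := Nat.le_ceil s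
      _ ≤ ((max N ⌈s⌉₊ : ℕ) : ℝ) := Nat.cast_le.mpr (le_max_right N ⌈s⌉₊)
      _ ≤ ts _ := hts _
  · rw [dist_comm]; exact hN _ (le_max_left _ _)

private lemma omega_seq (φ : ℝ → X → X) (ω : X → Set X)
    (hω : ∀ z, ω z = ⋂ (s : ℝ) (_ : 0 ≤ s), closure {w | ∃ t : ℝ, s ≤ t ∧ φ t z = w})
    {z w : X} (hz : z ∈ ω w) (g : ℕ → ℝ) :
    ∃ ts : ℕ → ℝ, (∀ n : ℕ, g n ≤ ts n) ∧
      Tendsto (fun n => φ (ts n) w) atTop (𝓝 z) ∧ (∀ n : ℕ, (n : ℝ) ≤ ts n) := by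
  have h : ∀ n : ℕ, ∃ t : ℝ, max (g n) n ≤ t ∧ dist (φ t w) z < 1 / (n + 1) :=
    fun n => omega_visit φ ω hω hz _ (by positivity)
  choose ts h1 h2 using h
  refine ⟨ts, fun n => le_trans (le_max_left _ _) (h1 n), ?_,
    fun n => le_trans (le_max_right _ _) (h1 n)⟩
  rw [Metric.tendsto_atTop]
  intro ε hε
  obtain ⟨N, hN⟩ := exists_nat_one_div_lt hε
  refine ⟨N, fun n hn => lt_of_lt_of_le (h2 n) (le_trans ?_ hN.le)⟩
  apply one_div_le_one_div_of_le
  · positivity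
  · have : (N : ℝ) ≤ n := Nat.cast_le.mpr hn
    linarith

private lemma omega_fwd (φ : ℝ → X → X) (hφc : Continuous fun q : ℝ × X => φ q.1 q.2)
    (hφadd : ∀ s t : ℝ, 0 ≤ s → 0 ≤ t → ∀ x, φ (s + t) x = φ s (φ t x))
    (ω : X → Set X)
    (hω : ∀ z, ω z = ⋂ (s : ℝ) (_ : 0 ≤ s), closure {w | ∃ t : ℝ, s ≤ t ∧ φ t z = w})
    {z w : X} (hz : z ∈ ω w) {t : ℝ} (ht : 0 ≤ t) : φ t z ∈ ω w := by
  obtain ⟨ts, -, hconv, hts⟩ := omega_seq φ ω hω hz (fun n => (n : ℝ))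
  refine omega_of_seq φ ω hω (fun n => t + ts n)
    (fun n => le_add_of_nonneg_left ht |>.trans' (by linarith [hts n])) ?_
  have h1 : Tendsto (fun n => φ t (φ (ts n) w)) atTop (𝓝 (φ t z)) :=
    ((cont_t φ hφc t).tendsto z).comp hconv
  exact h1.congr fun n =>
    (hφadd t (ts n) ht ((Nat.cast_nonneg n).trans (hts n)) w).symm

private lemma omega_back (φ : ℝ → X → X) (hφc : Continuous fun q : ℝ × X => φ q.1 q.2)
    (hφadd : ∀ s t : ℝ, 0 ≤ s → 0 ≤ t → ∀ x, φ (s + t) x = φ s (φ t x))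
    (hcompact : ∀ z : X, IsCompact (closure {w | ∃ t : ℝ, 0 ≤ t ∧ φ t z = w}))
    (ω : X → Set X)
    (hω : ∀ z, ω z = ⋂ (s : ℝ) (_ : 0 ≤ s), closure {w | ∃ t : ℝ, s ≤ t ∧ φ t z = w})
    {z w : X} (hz : z ∈ ω w) {t : ℝ} (ht : 0 ≤ t) :
    ∃ z', z' ∈ ω w ∧ φ t z' = z := by
  obtain ⟨ts, hge, hconv, -⟩ := omega_seq φ ω hω hz (fun n => (n : ℝ) + t)
  have hnn : ∀ n : ℕ, 0 ≤ ts n - t := fun n => by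
    have := hge n; have : (0:ℝ) ≤ (n:ℝ) := Nat.cast_nonneg n; linarith [hge n]
  have hK : ∀ n : ℕ, φ (ts n - t) w ∈ closure {w' | ∃ s : ℝ, 0 ≤ s ∧ φ s w = w'} :=
    fun n => subset_closure ⟨ts n - t, hnn n, rfl⟩
  obtain ⟨z', hz'K, σ, hσ, hσconv⟩ := (hcompact w).tendsto_subseq hK
  have heq : ∀ n : ℕ, φ t (φ (ts n - t) w) = φ (ts n) w := fun n => by
    rw [← hφadd t (ts n - t) ht (hnn n)]; ring_nf
  have h1 : Tendsto (fun n => φ t (φ (ts (σ n) - t) w)) atTop (𝓝 (φ t z')) :=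
    ((cont_t φ hφc t).tendsto z').comp hσconv
  have h2 : Tendsto (fun n => φ (ts (σ n)) w) atTop (𝓝 z) := hconv.comp hσ.tendsto_atTop
  have hz'' : z' ∈ ω w := by
    refine omega_of_seq φ ω hω (fun n => ts (σ n) - t) (fun n => ?_) hσconv
    show (n : ℝ) ≤ ts (σ n) - t
    have h3 : ((σ n : ℕ) : ℝ) + t ≤ ts (σ n) := hge (σ n)
    have h4 : (n : ℝ) ≤ (σ n : ℕ) := Nat.cast_le.mpr hσ.le_apply
    linarith
  exact ⟨z', hz'', tendsto_nhds_unique (h1.congr fun n => heq (σ n)) h2⟩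

private lemma omega_attract (φ : ℝ → X → X)
    (hcompact : ∀ z : X, IsCompact (closure {w | ∃ t : ℝ, 0 ≤ t ∧ φ t z = w}))
    (ω : X → Set X)
    (hω : ∀ z, ω z = ⋂ (s : ℝ) (_ : 0 ≤ s), closure {w | ∃ t : ℝ, s ≤ t ∧ φ t z = w})
    {w : X} {W : Set X} (hWo : IsOpen W) (hωW : ω w ⊆ W) :
    ∃ T : ℝ, 0 ≤ T ∧ ∀ τ : ℝ, T ≤ τ → φ τ w ∈ W := by
  by_contra h
  push_neg at h
  have h' : ∀ n : ℕ, ∃ τ : ℝ, (n : ℝ) ≤ τ ∧ φ τ w ∉ W := fun n =>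
    h (n : ℝ) (Nat.cast_nonneg n)
  choose τs hτ hτW using h'
  have hK : ∀ n : ℕ, φ (τs n) w ∈ closure {w' | ∃ s : ℝ, 0 ≤ s ∧ φ s w = w'} :=
    fun n => subset_closure ⟨τs n, le_trans (Nat.cast_nonneg n) (hτ n), rfl⟩
  obtain ⟨z', hz'K, σ, hσ, hσconv⟩ := (hcompact w).tendsto_subseq hK
  have hz' : z' ∈ ω w :=
    omega_of_seq φ ω hω (fun n => τs (σ n))
      (fun n => le_trans (Nat.cast_le.mpr hσ.le_apply) (hτ (σ n))) hσconv
  have hc : z' ∈ Wᶜ :=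
    hWo.isClosed_compl.mem_of_tendsto hσconv (Eventually.of_forall fun n => hτW (σ n))
  exact hc (hωW hz')

private lemma nonordering [PartialOrder X] (lt : X → X → Prop)
    (hlt_le : ∀ a b, lt a b → a ≤ b)
    (hlt_ne : ∀ a b, lt a b → a ≠ b)
    (hopen : ∀ a b, lt a b → ∃ U V : Set X, IsOpen U ∧ IsOpen V ∧ a ∈ U ∧ b ∈ V ∧
      ∀ u ∈ U, ∀ v ∈ V, lt u v)
    (φ : ℝ → X → X)
    (hφc : Continuous fun q : ℝ × X => φ q.1 q.2)
    (hφadd : ∀ s t : ℝ, 0 ≤ s → 0 ≤ t → ∀ x, φ (s + t) x = φ s (φ t x))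
    (hmono : ∀ x y : X, x ≤ y → x ≠ y → ∀ t : ℝ, 0 < t → lt (φ t x) (φ t y))
    (ω : X → Set X)
    (hω : ∀ z, ω z = ⋂ (s : ℝ) (_ : 0 ≤ s), closure {w | ∃ t : ℝ, s ≤ t ∧ φ t z = w})
    {y w qq : X} (hw : w ∈ ω y) (hqq : qq ∈ ω y) (hlt : lt w qq) : False := by
  obtain ⟨U, V, hUo, hVo, hwU, hqqV, hUV⟩ := hopen w qq hlt
  have visit : ∀ z : X, z ∈ ω y → ∀ O : Set X, IsOpen O → z ∈ O →
      ∀ s : ℝ, ∃ t, s ≤ t ∧ φ t y ∈ O := by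
    intro z hz O hO hzO s
    obtain ⟨ε, hε, hball⟩ := Metric.isOpen_iff.mp hO z hzO
    obtain ⟨t, hts, htd⟩ := omega_visit φ ω hω hz s hε
    exact ⟨t, hts, hball htd⟩
  obtain ⟨s₁, hs₁ge, hs₁V⟩ := visit qq hqq V hVo hqqV 0
  obtain ⟨s₂, hs₂ge, hs₂U⟩ := visit w hw U hUo hwU (s₁ + 1)
  obtain ⟨s₃', hs₃'ge, hs₃'V⟩ := visit qq hqq V hVo hqqV (s₂ + 1)
  have hψc : Continuous fun t : ℝ => φ t y := cont_x φ hφc y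
  obtain ⟨δ₀, hδ₀, hball⟩ := Metric.isOpen_iff.mp (hVo.preimage hψc) s₃' hs₃'V
  set δ : ℝ := min δ₀ ((s₃' - s₂) / 2) with hδdef
  have hδpos : 0 < δ := lt_min hδ₀ (by linarith)
  have hδδ₀ : δ ≤ δ₀ := min_le_left _ _
  have hδhalf : δ ≤ (s₃' - s₂) / 2 := min_le_right _ _
  set c : ℝ := s₂ - s₁ with hc
  have hcpos : 0 < c := by simp only [hc]; linarith
  -- pick a rational ρ with s₃' - δ - s₂ < ρ * c < s₃' + δ - s₂
  have hlohi : (s₃' - δ - s₂) / c < (s₃' + δ - s₂) / c := by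
    rw [div_lt_div_iff₀ hcpos hcpos]
    nlinarith [mul_pos hδpos hcpos]
  obtain ⟨ρ, hρ1, hρ2⟩ := exists_rat_btwn hlohi
  have hρc1 : s₃' - δ - s₂ < (ρ : ℝ) * c := by
    have := (div_lt_iff₀ hcpos).mp hρ1
    linarith
  have hρc2 : (ρ : ℝ) * c < s₃' + δ - s₂ := by
    have := (lt_div_iff₀ hcpos).mp hρ2
    linarith
  have hρpos : (0 : ℚ) < ρ := by
    have h1 : (0 : ℝ) < (s₃' - δ - s₂) / c := by
      apply div_pos _ hcpos
      linarith
    exact_mod_cast h1.trans hρ1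
  set s₃ : ℝ := s₂ + (ρ : ℝ) * c with hs₃def
  have hs₃V : φ s₃ y ∈ V := by
    apply hball
    rw [Metric.mem_ball, Real.dist_eq, abs_sub_lt_iff]
    constructor <;> [skip; skip] <;> simp only [hs₃def] <;>
      first
        | linarith
        | linarith
  have hs₁0 : 0 ≤ s₁ := hs₁ge
  have hs₂0 : 0 ≤ s₂ := by linarith
  have hs₃0 : 0 ≤ s₃ := by
    have : 0 ≤ (ρ : ℝ) * c := by positivity
    simp only [hs₃def]; linarith
  -- stepping lemma
  have hψadd : ∀ t s : ℝ, 0 < t → 0 ≤ s → φ t (φ s y) = φ (t + s) y :=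
    fun t s ht hs => (hφadd t s ht.le hs y).symm
  have step : ∀ sa sb : ℝ, 0 ≤ sa → 0 ≤ sb → lt (φ sa y) (φ sb y) →
      ∀ u : ℝ, 0 < u → lt (φ (u + sa) y) (φ (u + sb) y) := by
    intro sa sb ha hb h u hu
    have := hmono (φ sa y) (φ sb y) (hlt_le _ _ h) (hlt_ne _ _ h) u hu
    rwa [hψadd u sa hu ha, hψadd u sb hu hb] at this
  have hbase₁ : lt (φ s₂ y) (φ s₁ y) := hUV _ hs₂U _ hs₁V
  have hbase₂ : lt (φ s₂ y) (φ s₃ y) := hUV _ hs₂U _ hs₃V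
  have down : ∀ r : ℝ, s₂ < r → lt (φ (r + c) y) (φ r y) := by
    intro r hr
    have h := step s₂ s₁ hs₂0 hs₁0 hbase₁ (r - s₁) (by linarith)
    have e1 : r - s₁ + s₂ = r + c := by simp only [hc]; ring
    have e2 : r - s₁ + s₁ = r := by ring
    rwa [e1, e2] at h
  have up : ∀ r : ℝ, s₂ < r → lt (φ r y) (φ (r + (ρ : ℝ) * c) y) := by
    intro r hr
    have h := step s₂ s₃ hs₂0 hs₃0 hbase₂ (r - s₂) (by linarith)
    have e1 : r - s₂ + s₂ = r := by ring
    have e2 : r - s₂ + s₃ = r + (ρ : ℝ) * c := by simp only [hs₃def]; ring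
    rwa [e1, e2] at h
  set r₀ : ℝ := s₂ + 1 with hr₀
  have hρcpos : 0 < (ρ : ℝ) * c := by
    have : (0:ℝ) < (ρ:ℝ) := by exact_mod_cast hρpos
    positivity
  have chainUp : ∀ k : ℕ, φ r₀ y ≤ φ (r₀ + k * ((ρ : ℝ) * c)) y := by
    intro k
    induction k with
    | zero => simp
    | succ k ih =>
      have h := up (r₀ + k * ((ρ : ℝ) * c)) (by
        have : (0:ℝ) ≤ (k : ℝ) * ((ρ:ℝ)*c) := by positivity
        simp only [hr₀]; linarith)
      have e : r₀ + (k : ℝ) * ((ρ : ℝ) * c) + (ρ : ℝ) * c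
          = r₀ + ((k : ℕ) + 1 : ℕ) * ((ρ : ℝ) * c) := by push_cast; ring
      exact ih.trans (by rw [← e]; exact hlt_le _ _ h)
  have chainDown : ∀ k : ℕ, φ (r₀ + c + k * c) y ≤ φ (r₀ + c) y := by
    intro k
    induction k with
    | zero => simp
    | succ k ih =>
      have h := down (r₀ + c + k * c) (by
        have : (0:ℝ) ≤ (k : ℝ) * c := by positivity
        simp only [hr₀]; linarith)
      have e : r₀ + c + (k : ℝ) * c + c = r₀ + c + ((k : ℕ) + 1 : ℕ) * c := by
        push_cast; ring
      exact (by rw [← e]; exact hlt_le _ _ h : φ (r₀ + c + ((k:ℕ)+1:ℕ) * c) y ≤ φ (r₀ + c + (k:ℝ) * c) y).trans ih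
  -- arithmetic: ρ.den * (ρ * c) = ρ.num.toNat * c
  have hnum : 0 < ρ.num := Rat.num_pos.mpr hρpos
  set a : ℕ := ρ.num.toNat with ha
  have ha1 : 1 ≤ a := by omega
  have hkey : (ρ.den : ℝ) * ((ρ : ℝ) * c) = (a : ℝ) * c := by
    have hden : ((ρ.den : ℝ)) ≠ 0 := Nat.cast_ne_zero.mpr ρ.den_nz
    have h2 : ((ρ.den : ℝ)) * (ρ : ℝ) = ((ρ.num : ℤ) : ℝ) := by
      rw [Rat.cast_def, mul_comm, div_mul_cancel₀ _ hden]
    have h3 : ((a : ℕ) : ℝ) = ((ρ.num : ℤ) : ℝ) := by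
      simp only [ha]
      exact_mod_cast congrArg (Int.cast : ℤ → ℝ) (Int.toNat_of_nonneg hnum.le)
    rw [h3, ← h2]; ring
  have e5 : r₀ + (ρ.den : ℝ) * ((ρ : ℝ) * c) = r₀ + c + ((a - 1 : ℕ) : ℝ) * c := by
    rw [hkey]
    have : ((a - 1 : ℕ) : ℝ) = (a : ℝ) - 1 := by
      have : (1:ℕ) ≤ a := ha1
      push_cast [Nat.cast_sub this]
      ring
    rw [this]; ring
  have final : φ r₀ y ≤ φ (r₀ + c) y := by
    have h1 := chainUp ρ.den
    rw [e5] at h1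
    exact h1.trans (chainDown (a - 1))
  have h4 := down r₀ (by simp only [hr₀]; linarith)
  exact hlt_ne _ _ h4 (le_antisymm (hlt_le _ _ h4) final)


end AbsorptionAux

/-- Absorption principle: if some `q ∈ ω(y) \ ω(x)` dominates all of `ω(x)`,
then `ω(x)` and `ω(y)` are disjoint and `ω(x) ≪ ω(y)` pointwise. -/

theorem absorption_principle {X : Type*} [MetricSpace X] [PartialOrder X]
    (lt : X → X → Prop)
    (hclosed : IsClosed {q : X × X | q.1 ≤ q.2})
    (hlt_le : ∀ a b, lt a b → a ≤ b)
    (hlt_ne : ∀ a b, lt a b → a ≠ b)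
    (hopen : ∀ a b, lt a b → ∃ U V : Set X, IsOpen U ∧ IsOpen V ∧ a ∈ U ∧ b ∈ V ∧
      ∀ u ∈ U, ∀ v ∈ V, lt u v)
    (φ : ℝ → X → X)
    (hφc : Continuous fun q : ℝ × X => φ q.1 q.2)
    (hφ0 : ∀ x, φ 0 x = x)
    (hφadd : ∀ s t : ℝ, 0 ≤ s → 0 ≤ t → ∀ x, φ (s + t) x = φ s (φ t x))
    (hmono : ∀ x y : X, x ≤ y → x ≠ y → ∀ t : ℝ, 0 < t → lt (φ t x) (φ t y))
    (hcompact : ∀ z : X, IsCompact (closure {w | ∃ t : ℝ, 0 ≤ t ∧ φ t z = w}))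
    (ω : X → Set X)
    (hω : ∀ z, ω z = ⋂ (s : ℝ) (_ : 0 ≤ s), closure {w | ∃ t : ℝ, s ≤ t ∧ φ t z = w})
    (x y : X) (q : X) (hq : q ∈ ω y) (hq' : q ∉ ω x)
    (hdom : ∀ p ∈ ω x, p ≤ q) :
    ω x ∩ ω y = ∅ ∧ ∀ p ∈ ω x, ∀ q' ∈ ω y, lt p q' := by
  classical
  have contT : ∀ t : ℝ, Continuous fun z : X => φ t z := cont_t φ hφc
  -- uniform separation at each point of ω x against q
  have hsep : ∀ p : X, p ∈ ω x → ∃ U V : Set X, IsOpen U ∧ IsOpen V ∧ p ∈ U ∧ q ∈ V ∧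
      ∀ u ∈ U, ∀ v ∈ V, ∀ t : ℝ, 1 ≤ t → lt (φ t u) (φ t v) := by
    intro p hp
    have hpq : p ≤ q := hdom p hp
    have hne : p ≠ q := fun h => hq' (h ▸ hp)
    have h1 := hmono p q hpq hne 1 one_pos
    obtain ⟨U', V', hU'o, hV'o, hpU', hqV', hUV'⟩ := hopen _ _ h1
    refine ⟨(fun z => φ 1 z) ⁻¹' U', (fun z => φ 1 z) ⁻¹' V',
      hU'o.preimage (contT 1), hV'o.preimage (contT 1), hpU', hqV', ?_⟩
    intro u hu v hv t ht
    rcases eq_or_lt_of_le ht with h | h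
    · exact h ▸ hUV' _ hu _ hv
    · have hl := hUV' _ hu _ hv
      have h2 := hmono (φ 1 u) (φ 1 v) (hlt_le _ _ hl) (hlt_ne _ _ hl) (t - 1)
        (by linarith)
      have e : t - 1 + 1 = t := by ring
      rwa [← hφadd (t - 1) 1 (by linarith) zero_le_one u,
        ← hφadd (t - 1) 1 (by linarith) zero_le_one v, e] at h2
  -- ω x is compact
  have hωcl : IsClosed (ω x) := by
    rw [hω]
    exact isClosed_iInter fun s => isClosed_iInter fun _ => isClosed_closure
  have hωK : ω x ⊆ closure {w | ∃ t : ℝ, 0 ≤ t ∧ φ t x = w} := by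
    rw [hω]
    intro z hz
    exact Set.mem_iInter₂.mp hz 0 le_rfl
  have hωcomp : IsCompact (ω x) := (hcompact x).of_isClosed_subset hωcl hωK
  -- finite subcover
  have hch : ∀ p : (ω x : Set X), ∃ U V : Set X, IsOpen U ∧ IsOpen V ∧ (p : X) ∈ U ∧
      q ∈ V ∧ ∀ u ∈ U, ∀ v ∈ V, ∀ t : ℝ, 1 ≤ t → lt (φ t u) (φ t v) :=
    fun p => hsep p p.2
  choose U V hUo hVo hpU hqV hUV using hch
  have hcover : ω x ⊆ ⋃ i : (ω x : Set X), U i :=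
    fun p hp => Set.mem_iUnion.mpr ⟨⟨p, hp⟩, hpU ⟨p, hp⟩⟩
  obtain ⟨I, hI⟩ := hωcomp.elim_finite_subcover U hUo hcover
  have hWo : IsOpen (⋃ i ∈ I, U i) := isOpen_biUnion fun i _ => hUo i
  have hqVq : q ∈ ⋂ i ∈ I, V i := Set.mem_iInter₂.mpr fun i _ => hqV i
  have hVqo : IsOpen (⋂ i ∈ I, V i) := isOpen_biInter_finset fun i _ => hVo i
  have hWVq : ∀ u ∈ ⋃ i ∈ I, U i, ∀ v ∈ ⋂ i ∈ I, V i, ∀ t : ℝ, 1 ≤ t →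
      lt (φ t u) (φ t v) := by
    intro u hu v hv t ht
    obtain ⟨i, hiI, hui⟩ := Set.mem_iUnion₂.mp hu
    exact hUV i u hui v (Set.mem_iInter₂.mp hv i hiI) t ht
  -- attraction of the orbit of x to the open cover
  obtain ⟨T, hT0, hT⟩ := omega_attract φ hcompact ω hω hWo hI
  -- a large time where the orbit of y is in the neighborhood of q
  have hs0 : ∃ t : ℝ, 0 ≤ t ∧ φ t y ∈ ⋂ i ∈ I, V i := by
    obtain ⟨ε, hε, hball⟩ := Metric.isOpen_iff.mp hVqo q hqVq
    obtain ⟨t, hts, htd⟩ := omega_visit φ ω hω hq 0 hε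
    exact ⟨t, hts, hball htd⟩
  obtain ⟨s₀, hs₀T, hs₀V⟩ := hs0
  -- key comparison inequality between the two orbits
  have key : ∀ b' : ℝ, s₀ + 1 ≤ b' → ∀ a' : ℝ, b' - s₀ + T ≤ a' → lt (φ a' x) (φ b' y) := by
    intro b' hb' a' ha'
    have ht1 : (1 : ℝ) ≤ b' - s₀ := by linarith
    have hτT : T ≤ a' - (b' - s₀) := by linarith
    have hτ0 : 0 ≤ a' - (b' - s₀) := le_trans hT0 hτT
    have hx' : φ (a' - (b' - s₀)) x ∈ ⋃ i ∈ I, U i := hT _ hτT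
    have h := hWVq _ hx' _ hs₀V (b' - s₀) ht1
    have e1 : φ (b' - s₀) (φ (a' - (b' - s₀)) x) = φ a' x := by
      rw [← hφadd (b' - s₀) (a' - (b' - s₀)) (by linarith) hτ0]
      ring_nf
    have e2 : φ (b' - s₀) (φ s₀ y) = φ b' y := by
      rw [← hφadd (b' - s₀) s₀ (by linarith) hs₀T]
      ring_nf
    rwa [e1, e2] at h
  -- pointwise order between the omega limit sets
  have hle : ∀ p ∈ ω x, ∀ q'' ∈ ω y, p ≤ q'' := by
    intro p hp q'' hq''
    obtain ⟨bs, hbge, hbconv, -⟩ := omega_seq φ ω hω hq'' (fun _ => s₀ + 1)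
    obtain ⟨as, hage, haconv, -⟩ := omega_seq φ ω hω hp (fun n => bs n - s₀ + T)
    have hfor : ∀ n : ℕ, (φ (as n) x, φ (bs n) y) ∈ {r : X × X | r.1 ≤ r.2} :=
      fun n => hlt_le _ _ (key (bs n) (hbge n) (as n) (hage n))
    exact hclosed.mem_of_tendsto (haconv.prodMk_nhds hbconv)
      (Eventually.of_forall hfor)
  -- disjointness via nonordering
  have hdisj : ∀ z : X, z ∈ ω x → z ∈ ω y → False := by
    intro z hzx hzy
    have h1 : lt (φ 1 z) (φ 1 q) :=
      hmono z q (hdom z hzx) (fun h => hq' (h ▸ hzx)) 1 one_pos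
    have h2 : φ 1 z ∈ ω y := omega_fwd φ hφc hφadd ω hω hzy zero_le_one
    have h3 : φ 1 q ∈ ω y := omega_fwd φ hφc hφadd ω hω hq zero_le_one
    exact nonordering lt hlt_le hlt_ne hopen φ hφc hφadd hmono ω hω h2 h3 h1
  constructor
  · exact Set.eq_empty_iff_forall_notMem.mpr fun z hz => hdisj z hz.1 hz.2
  · intro p hp q'' hq''
    obtain ⟨p₁, hp₁, hp₁e⟩ := omega_back φ hφc hφadd hcompact ω hω hp zero_le_one
    obtain ⟨q₁, hq₁, hq₁e⟩ := omega_back φ hφc hφadd hcompact ω hω hq'' zero_le_one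
    have hne : p₁ ≠ q₁ := fun h => hdisj q₁ (h ▸ hp₁) hq₁
    have h := hmono p₁ q₁ (hle p₁ hp₁ q₁ hq₁) hne 1 one_pos
    rwa [hp₁e, hq₁e] at h
end

section
/- Let φ be a strongly monotone continuous semiflow on a second countable metric space X (setting as in the context), with all orbits precompact, and assume the limit set dichotomy: for x ≤ y with x ≠ y, either p ≪ q for all p ∈ ω(x), q ∈ ω(y), or ω(x) = ω(y) = {e} for some equilibrium e. Let L ⊆ X be a totally ordered subset (for any distinct p, q ∈ L, p ≤ q or q ≤ p). Then the set of points x ∈ L whose omega-limit set ω(x) is not a singleton equilibrium is countable. -/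
open Filter Topology

/-- On a totally ordered subset `L`, the set of points whose omega-limit set is
not a singleton equilibrium is countable. -/
theorem countable_nonconvergent_on_ordered_arc {X : Type*} [MetricSpace X]
    [SecondCountableTopology X] [PartialOrder X]
    (lt : X → X → Prop)
    (hclosed : IsClosed {q : X × X | q.1 ≤ q.2})
    (hlt_le : ∀ a b, lt a b → a ≤ b)
    (hlt_ne : ∀ a b, lt a b → a ≠ b)
    (hopen : ∀ a b, lt a b → ∃ U V : Set X, IsOpen U ∧ IsOpen V ∧ a ∈ U ∧ b ∈ V ∧
      ∀ u ∈ U, ∀ v ∈ V, lt u v)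
    (φ : ℝ → X → X)
    (hφc : Continuous fun q : ℝ × X => φ q.1 q.2)
    (hφ0 : ∀ x, φ 0 x = x)
    (hφadd : ∀ s t : ℝ, 0 ≤ s → 0 ≤ t → ∀ x, φ (s + t) x = φ s (φ t x))
    (hmono : ∀ x y : X, x ≤ y → x ≠ y → ∀ t : ℝ, 0 < t → lt (φ t x) (φ t y))
    (hcompact : ∀ z : X, IsCompact (closure {w | ∃ t : ℝ, 0 ≤ t ∧ φ t z = w}))
    (ω : X → Set X)
    (hω : ∀ z, ω z = ⋂ (s : ℝ) (_ : 0 ≤ s), closure {w | ∃ t : ℝ, s ≤ t ∧ φ t z = w})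
    -- omega-limit sets contain no two ordered distinct points
    (hnonord : ∀ z, ∀ p ∈ ω z, ∀ q ∈ ω z, p ≠ q → ¬ p ≤ q)
    -- limit set dichotomy
    (hdich : ∀ x y : X, x ≤ y → x ≠ y →
      (∀ p ∈ ω x, ∀ q ∈ ω y, lt p q) ∨
        (∃ e : X, (∀ t : ℝ, 0 ≤ t → φ t e = e) ∧ ω x = {e} ∧ ω y = {e}))
    (L : Set X) (hL : ∀ p ∈ L, ∀ q ∈ L, p ≠ q → p ≤ q ∨ q ≤ p) :
    {x ∈ L | ¬ ∃ e : X, (∀ t : ℝ, 0 ≤ t → φ t e = e) ∧ ω x = {e}}.Countable := by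
  classical
  set S := {x ∈ L | ¬ ∃ e : X, (∀ t : ℝ, 0 ≤ t → φ t e = e) ∧ ω x = {e}} with hS
  -- continuity of time-t maps
  have hcont : ∀ t : ℝ, Continuous (φ t) := fun t =>
    hφc.comp (continuous_const.prodMk continuous_id)
  -- tails
  set T : X → ℝ → Set X := fun z s => {w | ∃ t : ℝ, s ≤ t ∧ φ t z = w} with hT
  have hTmono : ∀ z, ∀ s s' : ℝ, s ≤ s' → T z s' ⊆ T z s := by
    rintro z s s' hss w ⟨t, ht, rfl⟩
    exact ⟨t, hss.trans ht, rfl⟩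
  -- omega limit sets are nonempty
  have homega_ne : ∀ z, (ω z).Nonempty := by
    intro z
    have key : (⋂ n : ℕ, closure (T z n)).Nonempty := by
      apply IsCompact.nonempty_iInter_of_sequence_nonempty_isCompact_isClosed
      · intro n
        exact closure_mono (hTmono z (n:ℝ) ((n+1:ℕ):ℝ) (by push_cast; linarith))
      · intro n
        exact ⟨φ n z, subset_closure ⟨(n : ℝ), le_refl _, rfl⟩⟩
      · have : T z (0 : ℕ) = {w | ∃ t : ℝ, 0 ≤ t ∧ φ t z = w} := by
          simp [hT]
        rw [this]; exact hcompact z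
      · intro n; exact isClosed_closure
    obtain ⟨w, hw⟩ := key
    refine ⟨w, ?_⟩
    rw [hω z]
    simp only [Set.mem_iInter]
    intro s hs
    have h1 : closure (T z (⌈s⌉₊ : ℕ)) ⊆ closure (T z s) :=
      closure_mono (hTmono z s _ (Nat.le_ceil s))
    exact h1 (Set.mem_iInter.1 hw ⌈s⌉₊)
  -- omega limit sets are positively invariant
  have hinv : ∀ z, ∀ t : ℝ, 0 ≤ t → ∀ w ∈ ω z, φ t w ∈ ω z := by
    intro z t ht w hw
    rw [hω z] at hw ⊢
    simp only [Set.mem_iInter] at hw ⊢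
    intro s hs
    have him : φ t '' T z s ⊆ T z s := by
      rintro _ ⟨u, ⟨r, hr, rfl⟩, rfl⟩
      exact ⟨t + r, by linarith, hφadd t r ht (hs.trans hr) z⟩
    have : φ t w ∈ closure (φ t '' T z s) :=
      (image_closure_subset_closure_image (hcont t)) ⟨w, hw s hs, rfl⟩
    exact closure_mono him this
  -- every point of S has two unordered points in its omega limit set
  have htwo : ∀ x ∈ S, ∃ a ∈ ω x, ∃ b ∈ ω x, ¬ a ≤ b ∧ ¬ b ≤ a := by
    intro x hx
    obtain ⟨a, ha⟩ := homega_ne x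
    by_cases h : ∃ b ∈ ω x, b ≠ a
    · obtain ⟨b, hb, hba⟩ := h
      exact ⟨a, ha, b, hb, hnonord x a ha b hb (Ne.symm hba), hnonord x b hb a ha hba⟩
    · push_neg at h
      have hsing : ω x = {a} := by
        apply Set.eq_singleton_iff_unique_mem.mpr
        exact ⟨ha, h⟩
      exfalso
      refine hx.2 ⟨a, fun t ht => ?_, hsing⟩
      have := hinv x t ht a (hsing ▸ rfl)
      rw [hsing] at this
      exact this
  -- countable basis
  obtain ⟨𝔅, h𝔅c, -, h𝔅⟩ := TopologicalSpace.exists_countable_basis X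
  -- the "unrelated" open set in X × X
  have hTopen : IsOpen {q : X × X | ¬ q.1 ≤ q.2 ∧ ¬ q.2 ≤ q.1} := by
    have h1 : IsOpen {q : X × X | ¬ q.1 ≤ q.2} := hclosed.isOpen_compl
    have h2 : IsOpen {q : X × X | ¬ q.2 ≤ q.1} := by
      have : Continuous (Prod.swap : X × X → X × X) := continuous_swap
      exact h1.preimage this
    exact h1.inter h2
  -- choose basis elements
  have hchoice : ∀ x ∈ S, ∃ U ∈ 𝔅, ∃ V ∈ 𝔅, (U ∩ ω x).Nonempty ∧ (V ∩ ω x).Nonempty ∧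
      ∀ u ∈ U, ∀ v ∈ V, ¬ u ≤ v := by
    intro x hx
    obtain ⟨a, ha, b, hb, hab, hba⟩ := htwo x hx
    have hmem : (a, b) ∈ {q : X × X | ¬ q.1 ≤ q.2 ∧ ¬ q.2 ≤ q.1} := ⟨hab, hba⟩
    obtain ⟨W, hW, habW, hWsub⟩ := (h𝔅.prod h𝔅).exists_subset_of_mem_open hmem hTopen
    obtain ⟨U, hU, V, hV, rfl⟩ := hW
    obtain ⟨haU, hbV⟩ := habW
    refine ⟨U, hU, V, hV, ⟨a, haU, ha⟩, ⟨b, hbV, hb⟩, ?_⟩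
    intro u hu v hv
    exact (hWsub (Set.mk_mem_prod hu hv)).1
  choose! U hU V hV hUω hVω hUV using hchoice
  -- the map x ↦ (U x, V x) is injective on S
  have hinj : Set.InjOn (fun x => (U x, V x)) S := by
    intro x hx y hy hxy
    by_contra hne
    have hUeq : U x = U y := congrArg Prod.fst hxy
    have hVeq : V x = V y := congrArg Prod.snd hxy
    -- wlog via cases
    have key : ∀ p q : X, p ∈ S → q ∈ S → p ≤ q → p ≠ q → U p = U q → V p = V q → False := by
      intro p q hp hq hle hpq hUe hVe
      rcases hdich p q hle hpq with hlt1 | ⟨e, he, hωp, hωq⟩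
      · obtain ⟨a, haU, haω⟩ := hUω p hp
        obtain ⟨b, hbV, hbω⟩ := hVω q hq
        have : lt a b := hlt1 a haω b hbω
        have hab : a ≤ b := hlt_le a b this
        have : ¬ a ≤ b := hUV q hq a (hUe ▸ haU) b hbV
        exact this hab
      · exact hp.2 ⟨e, he, hωp⟩
    rcases hL x hx.1 y hy.1 hne with hle | hle
    · exact key x y hx hy hle hne hUeq hVeq
    · exact key y x hy hx hle (Ne.symm hne) hUeq.symm hVeq.symm
  -- conclude countability
  have hmaps : Set.MapsTo (fun x => (U x, V x)) S (𝔅 ×ˢ 𝔅) := by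
    intro x hx
    exact ⟨hU x hx, hV x hx⟩
  exact hmaps.countable_of_injOn hinj (h𝔅c.prod h𝔅c)
end

section
/- Let K ⊆ ℝⁿ be a closed convex cone with nonempty interior and K ∩ (−K) = {0}, inducing the partial order x ≤_K y ⟺ y − x ∈ K. Let φ be a continuous semiflow on ℝⁿ with precompact orbits that is strongly monotone with respect to ≤_K: x ≤_K y, x ≠ y, t > 0 imply φ(t,y) − φ(t,x) ∈ int K. Assume that for every totally ordered subset L of ℝⁿ the set of non-convergent points in L is countable. Then the set D of points x ∈ ℝⁿ whose omega-limit set is not a single equilibrium has Lebesgue measure zero, provided D is Lebesgue measurable. -/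
/-!
Fix `v` in the interior of `K`. Each line `x + ℝ v` is totally ordered by `≤_K`, so it meets the
non-convergent set in a countable, hence Lebesgue-null, set; disintegrating Lebesgue measure along
the direction `v` (Fubini) shows that the non-convergent set is null. Pointedness of `K` forces
`v ≠ 0` unless `ℝⁿ` is a single point, in which case that point is a convergent equilibrium.
-/

open Topology MeasureTheory Set

theorem zero_notMem_interior_of_inter_neg_eq_zero {E : Type*} [TopologicalSpace E] [AddGroup E]
    [ContinuousNeg E] [(𝓝[≠] (0 : E)).NeBot] {K : Set E} (hK : K ∩ -K = {0}) :
    (0 : E) ∉ interior K := by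
  intro h0
  have hsub : interior K ∩ -interior K ⊆ {0} :=
    hK ▸ inter_subset_inter interior_subset (neg_subset_neg.2 interior_subset)
  have hzero : interior K ∩ -interior K = {0} :=
    hsub.antisymm (singleton_subset_iff.2 ⟨h0, by simpa using h0⟩)
  exact not_isOpen_singleton (0 : E) (hzero ▸ isOpen_interior.inter isOpen_interior.neg)

theorem isChain_range_add_smul {E : Type*} [AddCommGroup E] [Module ℝ E] {K : Set E} {v : E}
    (hv : ∀ a : ℝ, 0 ≤ a → a • v ∈ K) (x : E) :
    IsChain (fun p q => q - p ∈ K) (range fun t : ℝ => x + t • v) := by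
  rintro _ ⟨a, rfl⟩ _ ⟨b, rfl⟩ -
  simp only [add_sub_add_left_eq_sub, ← sub_smul]
  rcases le_total a b with hab | hba
  · exact .inl (hv _ (sub_nonneg.2 hab))
  · exact .inr (hv _ (sub_nonneg.2 hba))

theorem addHaar_eq_zero_of_forall_countable_slice {E : Type*} [NormedAddCommGroup E]
    [NormedSpace ℝ E] [MeasurableSpace E] [BorelSpace E] [FiniteDimensional ℝ E]
    (μ : Measure E) [μ.IsAddHaarMeasure] {s : Set E} (hs : MeasurableSet s) (v : E)
    (h : ∀ x, {t : ℝ | x + t • v ∈ s}.Countable) : μ s = 0 :=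
  measure_eq_zero_iff_ae_notMem.2 <|
    ae_mem_of_ae_add_linearMap_mem (LinearMap.toSpanSingleton ℝ E v) volume μ hs.compl
      fun x => measure_eq_zero_iff_ae_notMem.1 ((h x).measure_zero volume)

theorem nonconvergent_set_measure_zero_general (n : ℕ)
    (K : Set (Fin n → ℝ))
    (hKcone : ∀ (a : ℝ), 0 ≤ a → ∀ x ∈ K, a • x ∈ K)
    (hKpointed : K ∩ (-K) = {0})
    (hKsolid : (interior K).Nonempty)
    (φ : ℝ → (Fin n → ℝ) → (Fin n → ℝ))
    (ω : (Fin n → ℝ) → Set (Fin n → ℝ))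
    (hω : ∀ z, ω z = ⋂ (s : ℝ) (_ : 0 ≤ s), closure {w | ∃ t : ℝ, s ≤ t ∧ φ t z = w})
    (conv : Set (Fin n → ℝ))
    (hconv : conv = {x | ∃ e, (∀ t : ℝ, 0 ≤ t → φ t e = e) ∧ ω x = {e}})
    (hcountable : ∀ L : Set (Fin n → ℝ),
      (∀ p ∈ L, ∀ q ∈ L, p ≠ q → q - p ∈ K ∨ p - q ∈ K) → (L \ conv).Countable)
    (hmeas : MeasurableSet (convᶜ)) :
    volume (convᶜ) = 0 := by
  rcases subsingleton_or_nontrivial (Fin n → ℝ) with hE | hE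
  · suffices conv = univ by simp [this]
    refine eq_univ_of_forall fun x => hconv ▸ ⟨x, fun _ _ => Subsingleton.elim _ _, ?_⟩
    refine subsingleton_of_subsingleton.eq_singleton_of_mem (hω x ▸ mem_iInter₂.2 ?_)
    exact fun s _ => subset_closure ⟨s, le_rfl, Subsingleton.elim _ _⟩
  obtain ⟨v, hv⟩ := hKsolid
  have hv0 : v ≠ 0 := fun h => zero_notMem_interior_of_inter_neg_eq_zero hKpointed (h ▸ hv)
  refine addHaar_eq_zero_of_forall_countable_slice volume hmeas v fun x => ?_
  have hline := hcountable _ (isChain_range_add_smul (hKcone · · v (interior_subset hv)) x)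
  refine (hline.preimage ((add_right_injective x).comp (smul_left_injective ℝ hv0))).mono ?_
  exact fun t ht => ⟨mem_range_self t, ht⟩

/-- Flat-space case of the main theorem (Hirsch's generic convergence, measure
form): the set of non-convergent points of a strongly monotone semiflow on
`ℝⁿ` (with respect to a solid closed pointed cone) has Lebesgue measure zero,
provided each totally ordered set meets it in a countable set. -/
theorem nonconvergent_set_measure_zero (n : ℕ)
    (K : Set (Fin n → ℝ)) (hKclosed : IsClosed K) (hKconv : Convex ℝ K)
    (hKcone : ∀ (a : ℝ), 0 ≤ a → ∀ x ∈ K, a • x ∈ K)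
    (hKpointed : K ∩ (-K) = {0})
    (hKsolid : (interior K).Nonempty)
    (φ : ℝ → (Fin n → ℝ) → (Fin n → ℝ))
    (hφc : Continuous fun q : ℝ × (Fin n → ℝ) => φ q.1 q.2)
    (hφ0 : ∀ x, φ 0 x = x)
    (hφadd : ∀ s t : ℝ, 0 ≤ s → 0 ≤ t → ∀ x, φ (s + t) x = φ s (φ t x))
    (hcompact : ∀ z, IsCompact (closure {w | ∃ t : ℝ, 0 ≤ t ∧ φ t z = w}))
    (hmono : ∀ x y : Fin n → ℝ, y - x ∈ K → x ≠ y →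
      ∀ t : ℝ, 0 < t → φ t y - φ t x ∈ interior K)
    (ω : (Fin n → ℝ) → Set (Fin n → ℝ))
    (hω : ∀ z, ω z = ⋂ (s : ℝ) (_ : 0 ≤ s), closure {w | ∃ t : ℝ, s ≤ t ∧ φ t z = w})
    (conv : Set (Fin n → ℝ))
    (hconv : conv = {x | ∃ e, (∀ t : ℝ, 0 ≤ t → φ t e = e) ∧ ω x = {e}})
    (hcountable : ∀ L : Set (Fin n → ℝ),
      (∀ p ∈ L, ∀ q ∈ L, p ≠ q → q - p ∈ K ∨ p - q ∈ K) → (L \ conv).Countable)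
    (hmeas : MeasurableSet (convᶜ)) :
    volume (convᶜ) = 0 :=
  nonconvergent_set_measure_zero_general n K hKcone hKpointed hKsolid φ ω hω conv hconv hcountable
    hmeas
end

section
/- Let φ be a continuous semiflow on a metric space X with a partial order ≤ and relation ≪ ⊆ ≤ \ diagonal satisfying the uniform separation property: if u ≤ v with u ≠ v then there exist t₀ > 0 and neighborhoods U of u, V of v with φ(t,u') ≪ φ(t,v') for all u' ∈ U, v' ∈ V, t ≥ t₀. Suppose x ≤ y with x ≠ y, tₖ → ∞, φ(tₖ,x) → p and φ(tₖ,y) → q. Then p ≤ q, and if additionally p ∈ ω(x) ∩ ω(y) then, using that omega-limit sets contain no two ordered distinct points, p = q. -/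
open Filter Topology

/-- Limits of two ordered orbits along a common time sequence are ordered; if
the limit of the first orbit lies in both omega-limit sets, the two limits
coincide. -/
theorem ordered_orbit_limits {X : Type*} [MetricSpace X] [PartialOrder X]
    (lt : X → X → Prop)
    (hlt_le : ∀ a b, lt a b → a ≤ b)
    (hlt_ne : ∀ a b, lt a b → a ≠ b)
    (hquasi : ∀ (a b : X) (u v : ℕ → X), (∀ n, lt (u n) (v n)) →
      Tendsto u atTop (𝓝 a) → Tendsto v atTop (𝓝 b) → a ≤ b)
    (φ : ℝ → X → X)
    (hφc : Continuous fun q : ℝ × X => φ q.1 q.2)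
    (hφ0 : ∀ x, φ 0 x = x)
    (hφadd : ∀ s t : ℝ, 0 ≤ s → 0 ≤ t → ∀ x, φ (s + t) x = φ s (φ t x))
    (hsep : ∀ u v : X, u ≤ v → u ≠ v → ∃ t₀ : ℝ, 0 < t₀ ∧
      ∃ U V : Set X, IsOpen U ∧ IsOpen V ∧ u ∈ U ∧ v ∈ V ∧
        ∀ u' ∈ U, ∀ v' ∈ V, ∀ t : ℝ, t₀ ≤ t → lt (φ t u') (φ t v'))
    (hcompact : ∀ z : X, IsCompact (closure {w | ∃ t : ℝ, 0 ≤ t ∧ φ t z = w}))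
    (ω : X → Set X)
    (hω : ∀ z, ω z = ⋂ (s : ℝ) (_ : 0 ≤ s), closure {w | ∃ t : ℝ, s ≤ t ∧ φ t z = w})
    -- omega-limit sets contain no two ordered distinct points
    (hnonord : ∀ z, ∀ p ∈ ω z, ∀ q ∈ ω z, p ≠ q → ¬ p ≤ q)
    (x y : X) (hxy : x ≤ y) (hne : x ≠ y)
    (tk : ℕ → ℝ) (htk : Tendsto tk atTop atTop) (htk0 : ∀ k, 0 ≤ tk k)
    (p q : X)
    (hp : Tendsto (fun k => φ (tk k) x) atTop (𝓝 p))
    (hq : Tendsto (fun k => φ (tk k) y) atTop (𝓝 q)) :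
    p ≤ q ∧ (p ∈ ω x ∩ ω y → p = q) := by
  obtain ⟨t₀, ht₀, U, V, hU, hV, hxU, hyV, hUV⟩ := hsep x y hxy hne
  obtain ⟨N, hN⟩ := (htk.eventually_ge_atTop t₀).exists_forall_of_atTop
  have hpq : p ≤ q := by
    refine hquasi p q (fun n => φ (tk (n + N)) x) (fun n => φ (tk (n + N)) y)
      (fun n => hUV x hxU y hyV _ (hN (n + N) (Nat.le_add_left N n)))
      (hp.comp (tendsto_add_atTop_nat N)) (hq.comp (tendsto_add_atTop_nat N))
  refine ⟨hpq, fun hmem => ?_⟩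
  have hqω : q ∈ ω y := by
    rw [hω]
    refine Set.mem_iInter₂.2 fun s hs => ?_
    refine mem_closure_of_tendsto hq ?_
    filter_upwards [htk.eventually_ge_atTop s] with k hk
    exact ⟨tk k, hk, rfl⟩
  by_contra hpq'
  exact hnonord y p hmem.2 q hqω hpq' hpq
end
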